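/- arXiv:2401.08208 — 6 statements merged into one kernel-verified Lean document; each statement's English description precedes it below -/
import Mathlib

section
/- Let A be a set of k ≥ 4 positive integers. If |S(A)| = k(k+1)/2, then A = {d, 2d, ..., kd} for some positive integer d. -/
open Pointwise

/-- Set of all nonempty subset sums of a finite set of integers. -/
def SetSub (A : Finset ℤ) : Finset ℤ :=
  (A.powerset.filter (fun B => B.Nonempty)).image fun B => B.sum id

/-- Set of all subset sums over subsets of cardinality at least `α`. -/
def SetSubAlpha (α : ℕ) (A : Finset ℤ) : Finset ℤ :=
  (A.powerset.filter (fun B => α ≤ B.card)).image fun B => B.sum id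

/-- Set of all nonempty subsequence (sub-multiset) sums of a multiset of integers. -/
def SeqSub (A : Multiset ℤ) : Finset ℤ :=
  ((A.powerset.filter (fun B => B ≠ 0)).map Multiset.sum).toFinset

/-- Set of all sub-multiset sums with at least `α` terms. -/
def SeqSubAlpha (α : ℕ) (A : Multiset ℤ) : Finset ℤ :=
  ((A.powerset.filter (fun B => α ≤ Multiset.card B)).map Multiset.sum).toFinset

/-- `h`-fold sumset of a finite set of integers. -/
def hfold : ℕ → Finset ℤ → Finset ℤ
  | 0, _ => {0}
  | n + 1, X => X + hfold n X

/-- Restricted 2-fold sumset: sums of two distinct elements. -/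
def Res2 (A : Finset ℤ) : Finset ℤ :=
  ((A ×ˢ A).filter (fun p => p.1 ≠ p.2)).image fun p => p.1 + p.2

/-- The golden ratio. -/
noncomputable def theta : ℝ := (1 + Real.sqrt 5) / 2

def Tsum (k : ℕ) (f : ℕ → ℤ) (j : ℕ) : ℤ := ∑ i ∈ Finset.range j, f (k - 1 - i)

def cval (k : ℕ) (f : ℕ → ℤ) (p : ℕ × ℕ) : ℤ := Tsum k f p.1 + f p.2

def chainP (k : ℕ) : Finset (ℕ × ℕ) :=
  (Finset.range k ×ˢ Finset.range k).filter (fun p => p.1 + p.2 < k)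

def chainC (k : ℕ) (f : ℕ → ℤ) : Finset ℤ := (chainP k).image (cval k f)

lemma gauss_aux (n : ℕ) : 2 * (∑ j ∈ Finset.range n, (n - j)) = n * (n+1) := by
  induction n with
  | zero => simp
  | succ m ih =>
      rw [Finset.sum_range_succ]
      have e1 : ∑ j ∈ Finset.range m, (m + 1 - j) = ∑ j ∈ Finset.range m, ((m - j) + 1) := by
        apply Finset.sum_congr rfl
        intro j hj
        simp at hj
        omega
      rw [e1, Finset.sum_add_distrib, Finset.sum_const, Finset.card_range]
      have e2 : (m+1) * ((m+1)+1) = m*(m+1) + 2*(m+1) := by ring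
      simp only [smul_eq_mul, mul_one]
      omega

lemma chainP_card (k:ℕ) : (chainP k).card = k*(k+1)/2 := by
  classical
  have h : chainP k = (Finset.range k).biUnion (fun j => {j} ×ˢ Finset.range (k - j)) := by
    ext ⟨j,i⟩
    simp [chainP, Finset.mem_filter, Finset.mem_product]
    omega
  rw [h, Finset.card_biUnion]
  · have h2 : ∀ j ∈ Finset.range k, ({j} ×ˢ Finset.range (k-j)).card = k - j := by
      intro j hj; simp
    rw [Finset.sum_congr rfl h2]
    exact (Nat.div_eq_of_eq_mul_left (by norm_num) (by rw [← gauss_aux k]; ring)).symm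
  · intro x hx y hy hxy s hs1 hs2 a ha
    exfalso
    have h1 := (Finset.mem_product.1 (hs1 ha)).1
    have h2 := (Finset.mem_product.1 (hs2 ha)).1
    simp at h1 h2
    exact hxy (h1 ▸ h2)

lemma mem_chainP {k : ℕ} {p : ℕ × ℕ} : p ∈ chainP k ↔ p.1 < k ∧ p.2 < k ∧ p.1 + p.2 < k := by
  obtain ⟨a, b⟩ := p
  simp [chainP, Finset.mem_filter, Finset.mem_product]
  tauto

lemma Tsum_succ (k : ℕ) (f : ℕ → ℤ) (j : ℕ) :
    Tsum k f (j+1) = Tsum k f j + f (k-1-j) := Finset.sum_range_succ _ _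

lemma Tsum_mono (k : ℕ) (f : ℕ → ℤ) (hpos : ∀ i, i < k → 0 < f i)
    {j j' : ℕ} (h : j ≤ j') (h' : j' ≤ k) : Tsum k f j ≤ Tsum k f j' := by
  apply Finset.sum_le_sum_of_subset_of_nonneg
  · exact Finset.range_subset_range.2 h
  · intro i hi _
    simp only [Finset.mem_range] at hi
    exact le_of_lt (hpos _ (by omega))

lemma cval_strict_lt (k : ℕ) (f : ℕ → ℤ)
    (hmono : ∀ i j : ℕ, i < j → j < k → f i < f j)
    (hpos : ∀ i, i < k → 0 < f i)
    {p q : ℕ × ℕ} (hp : p ∈ chainP k) (hq : q ∈ chainP k)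
    (hlt : p.1 < q.1 ∨ (p.1 = q.1 ∧ p.2 < q.2)) : cval k f p < cval k f q := by
  rw [mem_chainP] at hp hq
  rcases hlt with h | ⟨h1, h2⟩
  · have hle1 : f p.2 ≤ f (k - 1 - p.1) := by
      rcases eq_or_lt_of_le (show p.2 ≤ k - 1 - p.1 by omega) with he | hl
      · rw [he]
      · exact le_of_lt (hmono _ _ hl (by omega))
    have e1 : Tsum k f p.1 + f (k - 1 - p.1) = Tsum k f (p.1 + 1) := (Tsum_succ k f p.1).symm
    have h2 : Tsum k f (p.1 + 1) ≤ Tsum k f q.1 := Tsum_mono k f hpos (by omega) (by omega)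
    have h3 : 0 < f q.2 := hpos _ hq.2.1
    unfold cval
    omega
  · unfold cval
    rw [h1]
    have := hmono p.2 q.2 h2 hq.2.1
    omega

lemma cval_injOn (k : ℕ) (f : ℕ → ℤ)
    (hmono : ∀ i j : ℕ, i < j → j < k → f i < f j)
    (hpos : ∀ i, i < k → 0 < f i) :
    ∀ p ∈ chainP k, ∀ q ∈ chainP k, cval k f p = cval k f q → p = q := by
  intro p hp q hq he
  by_contra hne
  have : p.1 < q.1 ∨ (p.1 = q.1 ∧ p.2 < q.2) ∨ q.1 < p.1 ∨ (q.1 = p.1 ∧ q.2 < p.2) := by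
    rcases Nat.lt_trichotomy p.1 q.1 with h | h | h
    · tauto
    · rcases Nat.lt_trichotomy p.2 q.2 with h' | h' | h'
      · tauto
      · exfalso; exact hne (Prod.ext h h')
      · tauto
    · tauto
  rcases this with h | h | h | h
  · exact absurd he (ne_of_lt (cval_strict_lt k f hmono hpos hp hq (Or.inl h)))
  · exact absurd he (ne_of_lt (cval_strict_lt k f hmono hpos hp hq (Or.inr h)))
  · exact absurd he.symm (ne_of_lt (cval_strict_lt k f hmono hpos hq hp (Or.inl h)))
  · exact absurd he.symm (ne_of_lt (cval_strict_lt k f hmono hpos hq hp (Or.inr h)))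

lemma mem_SetSub_pair {A : Finset ℤ} {a b : ℤ} (ha : a ∈ A) (hb : b ∈ A) (hab : a ≠ b) :
    a + b ∈ SetSub A := by
  simp only [SetSub, Finset.mem_image, Finset.mem_filter, Finset.mem_powerset]
  refine ⟨{a, b}, ⟨?_, ⟨a, by simp⟩⟩, ?_⟩
  · intro x hx
    simp at hx
    rcases hx with h | h <;> subst h <;> assumption
  · simp [Finset.sum_pair hab]

lemma chainC_subset (k : ℕ) (f : ℕ → ℤ)
    (hmono : ∀ i j : ℕ, i < j → j < k → f i < f j)
    (A : Finset ℤ) (hA : A = (Finset.range k).image f) :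
    chainC k f ⊆ SetSub A := by
  intro x hx
  simp only [chainC, Finset.mem_image] at hx
  obtain ⟨p, hp, hval⟩ := hx
  rw [mem_chainP] at hp
  -- index set
  set I : Finset ℕ := insert p.2 ((Finset.range p.1).image (fun i => k - 1 - i)) with hI
  have hIk : ∀ i ∈ I, i < k := by
    intro i hi
    rw [hI] at hi
    simp at hi
    rcases hi with h | ⟨a, ha, h⟩ <;> omega
  have hfinj : ∀ i ∈ I, ∀ j ∈ I, f i = f j → i = j := by
    intro i hi j hj hf
    by_contra hne
    rcases Nat.lt_or_ge i j with h | h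
    · exact absurd hf (ne_of_lt (hmono _ _ h (hIk _ hj)))
    · have : j < i := by omega
      exact absurd hf.symm (ne_of_lt (hmono _ _ this (hIk _ hi)))
  simp only [SetSub, Finset.mem_image, Finset.mem_filter, Finset.mem_powerset]
  refine ⟨I.image f, ⟨?_, ?_⟩, ?_⟩
  · rw [hA]
    intro y hy
    simp only [Finset.mem_image] at hy ⊢
    obtain ⟨i, hi, hiy⟩ := hy
    exact ⟨i, Finset.mem_range.2 (hIk i hi), hiy⟩
  · exact ⟨f p.2, Finset.mem_image_of_mem f (by rw [hI]; exact Finset.mem_insert_self _ _)⟩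
  · rw [Finset.sum_image hfinj]
    have hnot : p.2 ∉ (Finset.range p.1).image (fun i => k - 1 - i) := by
      simp only [Finset.mem_image, Finset.mem_range, not_exists]
      intro i
      intro hi
      omega
    rw [hI]
    rw [Finset.sum_insert hnot]
    have hinj2 : ∀ i ∈ Finset.range p.1, ∀ j ∈ Finset.range p.1, k - 1 - i = k - 1 - j → i = j := by
      intro i hi j hj h
      simp only [Finset.mem_range] at hi hj
      omega
    rw [Finset.sum_image hinj2]
    rw [← hval]
    simp only [cval, Tsum, id]
    ring

lemma chainC_card (k : ℕ) (f : ℕ → ℤ)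
    (hmono : ∀ i j : ℕ, i < j → j < k → f i < f j)
    (hpos : ∀ i, i < k → 0 < f i) :
    (chainC k f).card = k * (k+1) / 2 := by
  rw [chainC, Finset.card_image_of_injOn (cval_injOn k f hmono hpos), chainP_card]

lemma ssi_key (k : ℕ) (hk : 4 ≤ k) (f : ℕ → ℤ)
    (hmono : ∀ i j : ℕ, i < j → j < k → f i < f j)
    (hpos : ∀ i, i < k → 0 < f i)
    (A : Finset ℤ) (hA : A = (Finset.range k).image f)
    (hcard : (SetSub A).card = k * (k + 1) / 2) :
    ∀ i, i < k → f i = ((i : ℤ) + 1) * f 0 := by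
  have hS : chainC k f = SetSub A := by
    apply Finset.eq_of_subset_of_card_le (chainC_subset k f hmono A hA)
    rw [hcard, chainC_card k f hmono hpos]
  have hf0 : 0 < f 0 := hpos 0 (by omega)
  have flt : ∀ {i j : ℕ}, i < k → j < k → f i < f j → i < j := by
    intro i j hi hj hf
    by_contra h
    rcases Nat.eq_or_lt_of_le (Nat.le_of_not_lt h) with h' | h'
    · rw [h'] at hf; omega
    · have := hmono j i h' hi; omega
  have fge0 : ∀ j, j < k → f 0 ≤ f j := by
    intro j hj
    rcases Nat.eq_zero_or_pos j with h | h
    · rw [h]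
    · exact le_of_lt (hmono 0 j h hj)
  have hmem : ∀ a b : ℕ, a < k → b < k → a ≠ b →
      ∃ p ∈ chainP k, cval k f p = f a + f b := by
    intro a b ha hb hab
    have hfa : f a ∈ A := by rw [hA]; exact Finset.mem_image_of_mem f (Finset.mem_range.2 ha)
    have hfb : f b ∈ A := by rw [hA]; exact Finset.mem_image_of_mem f (Finset.mem_range.2 hb)
    have hne : f a ≠ f b := by
      rcases Nat.lt_or_ge a b with h | h
      · exact ne_of_lt (hmono a b h hb)
      · exact ne_of_gt (hmono b a (by omega) ha)
    have h1 : f a + f b ∈ chainC k f := by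
      rw [hS]; exact mem_SetSub_pair hfa hfb hne
    simpa [chainC, Finset.mem_image] using h1
  have hTs1 : Tsum k f 1 = f (k - 1) := by
    simp [Tsum]
  have hTs2 : Tsum k f 2 = f (k - 1) + f (k - 2) := by
    have h1 : Tsum k f 2 = Tsum k f 1 + f (k - 1 - 1) := Tsum_succ k f 1
    have h2 : k - 1 - 1 = k - 2 := by omega
    rw [h1, h2, hTs1]
  have hlow2 : ∀ p ∈ chainP k, 2 ≤ p.1 → Tsum k f 2 + f 0 ≤ cval k f p := by
    intro p hp h2
    rw [mem_chainP] at hp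
    have := Tsum_mono k f hpos h2 (le_of_lt hp.1)
    have := fge0 p.2 hp.2.1
    unfold cval; omega
  -- existence form of step A
  have exA : ∀ i, 1 ≤ i → i < k - 1 → ∃ j, i < j ∧ j < k ∧ f 0 + f i = f j := by
    intro i h1 h2
    obtain ⟨p, hp, hv⟩ := hmem 0 i (by omega) (by omega) (by omega)
    have hpm := mem_chainP.1 hp
    rcases Nat.eq_zero_or_pos p.1 with h0 | h0
    · refine ⟨p.2, ?_, hpm.2.1, ?_⟩
      · apply flt (by omega) hpm.2.1
        have : cval k f p = f p.2 := by simp [cval, h0, Tsum]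
        omega
      · have : cval k f p = f p.2 := by simp [cval, h0, Tsum]
        omega
    · exfalso
      have hT : Tsum k f 1 ≤ Tsum k f p.1 := Tsum_mono k f hpos h0 (le_of_lt hpm.1)
      have h3 : f p.2 ≥ f 0 := fge0 p.2 hpm.2.1
      have h4 : f i < f (k - 1) := hmono i (k-1) (by omega) (by omega)
      unfold cval at hv
      omega
  have stepA : ∀ m : ℕ, ∀ i, 1 ≤ i → i < k - 1 → i = k - 2 - m → f 0 + f i = f (i + 1) := by
    intro m
    induction m with
    | zero =>
        intro i h1 h2 h3
        obtain ⟨j, hj1, hj2, hj3⟩ := exA i h1 h2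
        have : j = i + 1 := by omega
        rw [← this]; exact hj3
    | succ n ih =>
        intro i h1 h2 h3
        obtain ⟨j, hj1, hj2, hj3⟩ := exA i h1 h2
        rcases Nat.lt_or_ge i (k - 2) with hc | hc
        · have hnext : f 0 + f (i + 1) = f (i + 2) := by
            apply ih (i+1) (by omega) (by omega) (by omega)
          have hlt : f i < f (i + 1) := hmono i (i+1) (by omega) (by omega)
          have : f j < f (i + 2) := by omega
          have : j < i + 2 := flt hj2 (by omega) this
          have : j = i + 1 := by omega
          rw [← this]; exact hj3
        · have : j = i + 1 := by omega
          rw [← this]; exact hj3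
  have stepA' : ∀ i, 1 ≤ i → i < k - 1 → f 0 + f i = f (i + 1) := by
    intro i h1 h2
    exact stepA (k - 2 - i) i h1 h2 (by omega)
  have stepB : ∀ i, 1 ≤ i → i < k → f i = f 1 + ((i : ℤ) - 1) * f 0 := by
    intro i
    induction i with
    | zero => omega
    | succ n ih =>
        intro h1 h2
        rcases Nat.eq_zero_or_pos n with h0 | h0
        · subst h0; push_cast; ring
        · have hn : f n = f 1 + ((n : ℤ) - 1) * f 0 := ih h0 (by omega)
          have := stepA' n h0 (by omega)
          push_cast
          rw [show f (n+1) = f 0 + f n from this.symm, hn]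
          ring
  have hfk1 : f (k - 1) = f 1 + ((k : ℤ) - 2) * f 0 := by
    have := stepB (k-1) (by omega) (by omega)
    rw [this]
    have : ((k - 1 : ℕ) : ℤ) = (k : ℤ) - 1 := by push_cast [Nat.cast_sub (by omega : 1 ≤ k)]; ring
    rw [this]; ring
  have hfk2 : f (k - 2) = f 1 + ((k : ℤ) - 3) * f 0 := by
    have := stepB (k-2) (by omega) (by omega)
    rw [this]
    have : ((k - 2 : ℕ) : ℤ) = (k : ℤ) - 2 := by push_cast [Nat.cast_sub (by omega : 2 ≤ k)]; ring
    rw [this]; ring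
  have hf21 : f 2 = f 0 + f 1 := (stepA' 1 (by omega) (by omega)).symm
  have hf1gt : f 0 < f 1 := hmono 0 1 (by omega) (by omega)
  -- step C : f 1 = m * f 0 for some integer m ≥ 2
  have stepC : ∃ m : ℤ, 2 ≤ m ∧ f 1 = m * f 0 := by
    obtain ⟨p, hp, hv⟩ := hmem 1 2 (by omega) (by omega) (by omega)
    have hpm := mem_chainP.1 hp
    rcases Nat.lt_or_ge p.1 2 with hc | hc
    · interval_cases h : p.1
      · -- p.1 = 0
        have hv0 : f p.2 = f 1 + f 2 := by
          simp only [cval, Tsum, h] at hv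
          simp at hv
          omega
        have hp2pos : 1 ≤ p.2 := by
          by_contra hz
          have : p.2 = 0 := by omega
          rw [this] at hv0
          have := hpos 2 (by omega)
          omega
        have hB := stepB p.2 hp2pos hpm.2.1
        rw [hB, hf21] at hv0
        refine ⟨(p.2 : ℤ) - 2, ?_, by linarith⟩
        have hgt : f 0 < ((p.2 : ℤ) - 2) * f 0 := by linarith
        nlinarith
      · -- p.1 = 1
        have hv1 : f (k - 1) + f p.2 = f 1 + f 2 := by
          simp only [cval, h, hTs1] at hv
          exact hv
        rcases Nat.eq_zero_or_pos p.2 with h0 | h0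
        · rw [h0] at hv1
          refine ⟨(k : ℤ) - 2, by push_cast; omega, ?_⟩
          rw [hfk1, hf21] at hv1
          linarith
        · exfalso
          have hB := stepB p.2 h0 hpm.2.1
          rw [hfk1, hB, hf21] at hv1
          have hcancel : ((k : ℤ) + (p.2 : ℤ) - 4) * f 0 = 0 := by linarith
          have : ((k : ℤ) + (p.2 : ℤ) - 4) = 0 := by
            rcases mul_eq_zero.1 hcancel with h | h
            · exact h
            · omega
          omega
    · exfalso
      have hlb := hlow2 p hp hc
      rw [hTs2, hfk1, hfk2, hv, hf21] at hlb
      nlinarith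
  obtain ⟨m, hm2, hm⟩ := stepC
  -- step D : m = 2, i.e. f 1 = 2 * f 0
  have stepD : f 1 = 2 * f 0 := by
    obtain ⟨p, hp, hv⟩ := hmem 1 (k - 2) (by omega) (by omega) (by omega)
    have hpm := mem_chainP.1 hp
    rcases Nat.lt_or_ge p.1 2 with hc | hc
    · interval_cases h : p.1
      · -- p.1 = 0 : impossible
        exfalso
        have hv0 : f p.2 = f 1 + f (k - 2) := by
          simp only [cval, Tsum, h] at hv
          simp at hv
          omega
        have hkm2 : 0 < f (k - 2) := hpos (k-2) (by omega)
        have hp2pos : 1 ≤ p.2 := by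
          by_contra hz
          have : p.2 = 0 := by omega
          rw [this] at hv0
          omega
        have hB := stepB p.2 hp2pos hpm.2.1
        rw [hB, hfk2, hm] at hv0
        have hcancel : ((p.2 : ℤ) - (m + (k : ℤ) - 2)) * f 0 = 0 := by linarith
        have h0 : ((p.2 : ℤ) - (m + (k : ℤ) - 2)) = 0 := by
          rcases mul_eq_zero.1 hcancel with h | h
          · exact h
          · omega
        have : (p.2 : ℤ) = m + (k : ℤ) - 2 := by omega
        have hlt : (p.2 : ℤ) < (k : ℤ) := by exact_mod_cast hpm.2.1
        omega
      · -- p.1 = 1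
        have hv1 : f (k - 1) + f p.2 = f 1 + f (k - 2) := by
          simp only [cval, h, hTs1] at hv
          exact hv
        rcases Nat.eq_zero_or_pos p.2 with h0 | h0
        · rw [h0, hfk1, hfk2] at hv1
          linarith
        · exfalso
          have hB := stepB p.2 h0 hpm.2.1
          rw [hfk1, hfk2, hB] at hv1
          have hcancel : (p.2 : ℤ) * f 0 = 0 := by linarith
          rcases mul_eq_zero.1 hcancel with h | h
          · omega
          · omega
    · exfalso
      have hlb := hlow2 p hp hc
      rw [hTs2, hfk1, hfk2, hv] at hlb
      nlinarith
  intro i hi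
  rcases Nat.eq_zero_or_pos i with h0 | h0
  · rw [h0]; push_cast; ring
  · rw [stepB i h0 hi, stepD]; ring
theorem subset_sum_inverse (A : Finset ℤ) (hpos : ∀ a ∈ A, 0 < a) (hk : 4 ≤ A.card)
    (hcard : (SetSub A).card = A.card * (A.card + 1) / 2) :
    ∃ d : ℤ, 0 < d ∧ A = (Finset.Icc 1 A.card).image fun i : ℕ => (i : ℤ) * d := by
  classical
  set k := A.card with hkdef
  let e := A.orderIsoOfFin (rfl : A.card = k)
  let f : ℕ → ℤ := fun i => if h : i < k then ((e ⟨i, h⟩ : A) : ℤ) else 0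
  have hfmem : ∀ i, (h : i < k) → f i ∈ A := by
    intro i h
    simp only [f, dif_pos h]
    exact (e ⟨i, h⟩).2
  have hfval : ∀ i, (h : i < k) → f i = ((e ⟨i, h⟩ : A) : ℤ) := by
    intro i h
    simp only [f, dif_pos h]
  have hmono : ∀ i j : ℕ, i < j → j < k → f i < f j := by
    intro i j hij hj
    have hi : i < k := lt_trans hij hj
    rw [hfval i hi, hfval j hj]
    have : (⟨i, hi⟩ : Fin k) < ⟨j, hj⟩ := hij
    exact_mod_cast e.strictMono this
  have hfpos : ∀ i, i < k → 0 < f i := fun i h => hpos _ (hfmem i h)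
  have hA : A = (Finset.range k).image f := by
    apply Finset.ext
    intro a
    constructor
    · intro ha
      obtain ⟨i, hi⟩ := e.surjective ⟨a, ha⟩
      refine Finset.mem_image.2 ⟨i.1, Finset.mem_range.2 i.2, ?_⟩
      rw [hfval i.1 i.2]
      simp only [Fin.eta, hi]
    · intro ha
      obtain ⟨i, hi, hia⟩ := Finset.mem_image.1 ha
      rw [← hia]
      exact hfmem i (Finset.mem_range.1 hi)
  have key := ssi_key k hk f hmono hfpos A hA hcard
  refine ⟨f 0, hfpos 0 (by omega), ?_⟩
  apply Finset.ext
  intro x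
  constructor
  · intro hx
    rw [hA] at hx
    obtain ⟨i, hi, hix⟩ := Finset.mem_image.1 hx
    rw [Finset.mem_range] at hi
    refine Finset.mem_image.2 ⟨i + 1, Finset.mem_Icc.2 ⟨by omega, by omega⟩, ?_⟩
    rw [← hix, key i hi]
    push_cast
    ring
  · intro hx
    obtain ⟨i, hi, hix⟩ := Finset.mem_image.1 hx
    rw [Finset.mem_Icc] at hi
    have h1 : i - 1 < k := by omega
    have : f (i - 1) = x := by
      rw [key (i-1) h1, ← hix]
      have : ((i - 1 : ℕ) : ℤ) = (i : ℤ) - 1 := by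
        push_cast [Nat.cast_sub (by omega : 1 ≤ i)]; ring
      rw [this]
      ring
    rw [← this]
    exact hfmem (i-1) h1
end

section
/- Let k ≥ 4 and A = {a_0, a_1, ..., a_{k-1}} be a set of k nonnegative integers with 0 = a_0 < a_1 < ... < a_{k-1} and gcd(A) = 1. If a_{k-1} ≤ 2k - 5, then |S(A)| ≥ a_{k-1} + (k-1)(k-2)/2 + 1; if a_{k-1} ≥ 2k - 4, then |S(A)| ≥ θk - 3 + (k-1)(k-2)/2, where θ = (1+√5)/2. -/
open Pointwise

/-!
Induct on `|A|` by removing the largest element `z`; write `A'` for the rest and `w` for its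
largest element. A subset sum `s` of `A'` with `s + z ∉ S(A')` yields the new sum `s + z`, so
`|S(A)| ≥ |S(A')| + #{such s}`, and the reflection `s ↦ ∑ A' - s` shows that there are at least as
many such `s` as subset sums of `A'` below `z`. Writing `|A'| = n`, there are three cases.
* If the elements of `A'` have a common factor `g > 1`, then `g ∤ z` and every `s` qualifies.
* If `w ≤ 2n - 5`, pigeonhole makes every integer in `(w, 2n - 3]` a sum of two elements of `A'`,
  which adds that many sums below `z`.
* If `w ≥ 2n - 4`, at least `n + 1` sums qualify: if only the `n` reflections `∑ A' - a` did,
  every subset sum of `A'` would reduce modulo `z` into `A'`; with `q = z - w` this makes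
  `A' \ {w}` closed under `a ↦ a - q`, so `q` divides everything, `q = 1`, `A' \ {w}` is the
  interval `[0, n - 2]`, and the sum of its two largest elements is `≥ w` and `≤ 2n - 5`.

Altogether `2|S(A)| ≥ n(n+1) + 2 + 2 min(z - n, n - 3)` for `|A| = n + 1`. In the second case
of the theorem this gives `(k-1)(k-2)/2 + 2k - 4`, which beats the claim since `θ ≤ 7/4`.
-/

open Finset

section SubsetSums

variable {A : Finset ℤ}

lemma mem_setSub {x : ℤ} : x ∈ SetSub A ↔ ∃ B ⊆ A, B.Nonempty ∧ B.sum id = x := by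
  simp [SetSub, and_assoc]

lemma sum_mem_setSub {B : Finset ℤ} (hB : B ⊆ A) (hne : B.Nonempty) : B.sum id ∈ SetSub A :=
  mem_setSub.2 ⟨B, hB, hne, rfl⟩

lemma mem_setSub_of_mem {a : ℤ} (ha : a ∈ A) : a ∈ SetSub A := by
  simpa using sum_mem_setSub (singleton_subset_iff.2 ha) (singleton_nonempty a)

lemma add_mem_setSub {a b : ℤ} (ha : a ∈ A) (hb : b ∈ A) (hab : a ≠ b) : a + b ∈ SetSub A := by
  simpa [sum_pair hab] using sum_mem_setSub (insert_subset ha (singleton_subset_iff.2 hb))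
    (insert_nonempty a {b})

lemma dvd_of_mem_setSub {g s : ℤ} (hg : ∀ x ∈ A, g ∣ x) (hs : s ∈ SetSub A) : g ∣ s := by
  obtain ⟨B, hBA, -, rfl⟩ := mem_setSub.1 hs
  exact dvd_sum fun x hx => hg x (hBA hx)

lemma le_sum_of_mem_setSub (hnn : ∀ x ∈ A, 0 ≤ x) {s : ℤ} (hs : s ∈ SetSub A) :
    s ≤ A.sum id := by
  obtain ⟨B, hBA, -, rfl⟩ := mem_setSub.1 hs
  exact sum_le_sum_of_subset_of_nonneg hBA fun x hx _ => hnn x hx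

lemma sum_sub_mem_setSub (h0 : 0 ∈ A) {s : ℤ} (hs : s ∈ SetSub A) :
    A.sum id - s ∈ SetSub A := by
  obtain ⟨B, hBA, -, rfl⟩ := mem_setSub.1 hs
  rw [← sum_sdiff_eq_sub hBA]
  by_cases hAB : (A \ B).Nonempty
  · exact sum_mem_setSub sdiff_subset hAB
  · rw [not_nonempty_iff_eq_empty.1 hAB, sum_empty]
    exact mem_setSub_of_mem h0

lemma add_mem_setSub_insert {z s : ℤ} (hz : z ∉ A) (hs : s ∈ SetSub A) :
    s + z ∈ SetSub (insert z A) := by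
  obtain ⟨B, hBA, -, rfl⟩ := mem_setSub.1 hs
  have hzB : z ∉ B := fun h => hz (hBA h)
  simpa [sum_insert hzB, add_comm] using
    sum_mem_setSub (insert_subset_insert z hBA) (insert_nonempty z B)

lemma setSub_mono {B : Finset ℤ} (h : A ⊆ B) : SetSub A ⊆ SetSub B := fun x hx => by
  obtain ⟨C, hCA, hCne, rfl⟩ := mem_setSub.1 hx
  exact sum_mem_setSub (hCA.trans h) hCne

end SubsetSums

lemma card_le_of_subset_Icc {A : Finset ℤ} {a b : ℤ} (h : A ⊆ Icc a b) :
    #A ≤ (b + 1 - a).toNat :=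
  Int.card_Icc a b ▸ card_le_card h

lemma eq_one_of_dvd_insert {A : Finset ℤ} {z q : ℤ} (hgcd : (insert z A).gcd id = 1)
    (hq : 0 ≤ q) (hqz : q ∣ z) (hqA : ∀ x ∈ A, q ∣ x) : q = 1 :=
  Int.eq_one_of_dvd_one hq <| hgcd ▸ dvd_gcd fun x hx => by
    rcases mem_insert.1 hx with rfl | hx
    exacts [hqz, hqA x hx]

/-- The subset sums `s` of `A` that `z` turns into new subset sums `s + z` of `insert z A`. -/
def exitSums (A : Finset ℤ) (z : ℤ) : Finset ℤ :=
  (SetSub A).filter fun s => s + z ∉ SetSub A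

section ExitSums

variable {A : Finset ℤ} {z : ℤ}

lemma card_setSub_add_card_exitSums_le (hz : z ∉ A) :
    #(SetSub A) + #(exitSums A z) ≤ #(SetSub (insert z A)) := by
  have hdisj : Disjoint (SetSub A) ((exitSums A z).image (· + z)) := by
    rw [disjoint_right]
    rintro _ hx
    obtain ⟨s, hs, rfl⟩ := mem_image.1 hx
    exact (mem_filter.1 hs).2
  have hsub : SetSub A ∪ (exitSums A z).image (· + z) ⊆ SetSub (insert z A) := by
    refine union_subset (setSub_mono (subset_insert z A)) fun x hx => ?_
    obtain ⟨s, hs, rfl⟩ := mem_image.1 hx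
    exact add_mem_setSub_insert hz (mem_filter.1 hs).1
  calc #(SetSub A) + #(exitSums A z)
      = #(SetSub A ∪ (exitSums A z).image (· + z)) := by
        rw [card_union_of_disjoint hdisj, card_image_of_injective _ (add_left_injective z)]
    _ ≤ _ := card_le_card hsub

lemma exitSums_eq_setSub {g : ℤ} (hg : ∀ x ∈ A, g ∣ x) (hz : ¬ g ∣ z) :
    exitSums A z = SetSub A :=
  filter_true_of_mem fun s hs hsz => hz <| by
    simpa using dvd_sub (dvd_of_mem_setSub hg hsz) (dvd_of_mem_setSub hg hs)

end ExitSums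

/-- Pigeonhole: the window `[x - b, x + 1 - #A]` has one more element than `[0, b] \ A`, so some
`t` in it has both `t` and `x - t` in `A`. -/
lemma Icc_subset_setSub {A : Finset ℤ} {b : ℤ} (hne : A.Nonempty) (hA : A ⊆ Icc 0 b) :
    Icc (b + 1) (2 * #A - 3) ⊆ SetSub A := by
  intro x hx
  obtain ⟨hbx, hx⟩ := mem_Icc.1 hx
  have hcard := card_le_of_subset_Icc hA
  obtain ⟨c, hc⟩ := hne
  have hb := mem_Icc.1 (hA hc)
  have hmiss : #(Icc 0 b \ A) = (b + 1 - 0).toNat - #A := by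
    rw [card_sdiff_of_subset hA, Int.card_Icc]
  by_contra hxS
  have hpair : ∀ t ∈ Icc (x - b) (x + 1 - #A), t ∈ A → x - t ∉ A := fun t ht htA hxtA => by
    obtain ⟨h1, h2⟩ := mem_Icc.1 ht
    exact hxS (by simpa using add_mem_setSub htA hxtA (by omega))
  have hinj := card_le_card_of_injOn (fun t => if t ∈ A then x - t else t)
    (s := Icc (x - b) (x + 1 - #A)) (t := Icc 0 b \ A) (fun t ht => ?_) (fun t₁ ht₁ t₂ ht₂ h => ?_)
  · rw [Int.card_Icc, hmiss] at hinj
    omega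
  · obtain ⟨h1, h2⟩ := mem_Icc.1 ht
    simp only [coe_sdiff, coe_Icc, Set.mem_sdiff, Set.mem_Icc, mem_coe]
    split_ifs with htA
    · exact ⟨⟨by omega, by omega⟩, hpair t (mem_Icc.2 ⟨h1, h2⟩) htA⟩
    · exact ⟨⟨by omega, by omega⟩, htA⟩
  · simp only [coe_Icc, Set.mem_Icc] at ht₁ ht₂ h
    split_ifs at h <;> omega

section Rigidity

variable {A : Finset ℤ} {z : ℤ} (h0 : 0 ∈ A) (hnn : ∀ x ∈ A, 0 ≤ x)
include h0 hnn

lemma sum_sub_mem_exitSums {s : ℤ} (hs : s ∈ SetSub A) (hsz : s < z) :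
    A.sum id - s ∈ exitSums A z := by
  refine mem_filter.2 ⟨sum_sub_mem_setSub h0 hs, fun hmem => ?_⟩
  have := le_sum_of_mem_setSub hnn hmem
  omega

lemma card_le_card_exitSums {V : Finset ℤ} (hV : V ⊆ SetSub A) (hVz : ∀ v ∈ V, v < z) :
    #V ≤ #(exitSums A z) :=
  card_le_card_of_injOn (A.sum id - ·) (fun v hv => sum_sub_mem_exitSums h0 hnn (hV hv) (hVz v hv))
    fun _ _ _ _ h => by simpa using h

variable (hlt : ∀ x ∈ A, x < z)
include hlt

lemma exitSums_eq_image_of_card_le (hcard : #(exitSums A z) ≤ #A) :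
    exitSums A z = A.image (A.sum id - ·) := by
  refine (eq_of_subset_of_card_le (fun t ht => ?_) ?_).symm
  · obtain ⟨a, ha, rfl⟩ := mem_image.1 ht
    exact sum_sub_mem_exitSums h0 hnn (mem_setSub_of_mem ha) (hlt a ha)
  · rwa [card_image_of_injective _ sub_right_injective]

/-- Climbing from a subset sum in steps of `z` must leave `SetSub A` at some `∑ A - a`. -/
lemma exists_emod_eq_of_exitSums_eq (hex : exitSums A z = A.image (A.sum id - ·)) {t : ℤ}
    (ht : t ∈ SetSub A) : ∃ a ∈ A, t % z = (A.sum id - a) % z := by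
  have hclimb : ∀ j : ℕ, ∀ t ∈ SetSub A, A.sum id - t < j * z →
      ∃ a ∈ A, t % z = (A.sum id - a) % z := by
    intro j
    induction j with
    | zero =>
      intro t ht hj
      have := le_sum_of_mem_setSub hnn ht
      simp only [CharP.cast_eq_zero, zero_mul] at hj
      omega
    | succ j ih =>
      intro t ht hj
      by_cases htz : t + z ∈ SetSub A
      · obtain ⟨a, ha, h⟩ := ih (t + z) htz (by push_cast at hj; linarith)
        exact ⟨a, ha, by rw [← h, Int.add_emod_right]⟩
      · have : t ∈ exitSums A z := mem_filter.2 ⟨ht, htz⟩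
        rw [hex] at this
        obtain ⟨a, ha, rfl⟩ := mem_image.1 this
        exact ⟨a, ha, rfl⟩
  refine hclimb ((A.sum id - t).toNat + 1) t ht ?_
  have : (((A.sum id - t).toNat + 1 : ℕ) : ℤ) ≤ ((A.sum id - t).toNat + 1 : ℕ) * z :=
    le_mul_of_one_le_right (by positivity) (hlt 0 h0)
  omega

/-- The residues of the `∑ A - a` contain `A` and are at most `#A` many, so they are exactly `A`. -/
lemma emod_mem_of_exitSums_eq (hex : exitSums A z = A.image (A.sum id - ·)) {t : ℤ}
    (ht : t ∈ SetSub A) : t % z ∈ A := by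
  have hAR : A ⊆ A.image fun a => (A.sum id - a) % z := fun a ha => by
    obtain ⟨a', ha', h⟩ := exists_emod_eq_of_exitSums_eq h0 hnn hlt hex (mem_setSub_of_mem ha)
    rw [Int.emod_eq_of_lt (hnn a ha) (hlt a ha)] at h
    exact mem_image.2 ⟨a', ha', h.symm⟩
  have hRA := eq_of_subset_of_card_le hAR card_image_le
  obtain ⟨a, ha, h⟩ := exists_emod_eq_of_exitSums_eq h0 hnn hlt hex ht
  have := mem_image_of_mem (fun a => (A.sum id - a) % z) ha
  rw [← hRA] at this
  rwa [h]

end Rigidity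

lemma card_setSub_ge {A : Finset ℤ} (h0 : 0 ∈ A) (hnn : ∀ x ∈ A, 0 ≤ x) (n : ℕ)
    (hcard : #A = n + 1) : n * (n + 1) + 2 ≤ 2 * #(SetSub A) := by
  induction n generalizing A with
  | zero => simpa using card_pos.2 ⟨0, mem_setSub_of_mem h0⟩
  | succ n ih =>
    have hne : A.Nonempty := ⟨0, h0⟩
    set z := A.max' hne
    have hzA : z ∈ A := max'_mem A hne
    have hz : ∀ x ∈ A, x ≤ z := fun x hx => le_max' A x hx
    have hlt : ∀ x ∈ A.erase z, x < z := fun x hx =>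
      lt_of_le_of_ne (hz x (mem_of_mem_erase hx)) (ne_of_mem_erase hx)
    have hz0 : 0 < z := by
      have := card_le_of_subset_Icc fun x hx => mem_Icc.2 ⟨hnn x hx, hz x hx⟩
      omega
    have h0' : 0 ∈ A.erase z := mem_erase.2 ⟨hz0.ne, h0⟩
    have hnn' : ∀ x ∈ A.erase z, 0 ≤ x := fun x hx => hnn x (mem_of_mem_erase hx)
    have hcard' : #(A.erase z) = n + 1 := by rw [card_erase_of_mem hzA, hcard]; rfl
    have hinc := card_setSub_add_card_exitSums_le (notMem_erase z A)
    have hexit := card_le_card_exitSums h0' hnn' (fun x hx => mem_setSub_of_mem hx) hlt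
    rw [insert_erase hzA] at hinc
    have := ih h0' hnn' hcard'
    nlinarith

section Descent

variable {T : Finset ℤ} {q : ℤ} (hq : 0 < q) (hT : ∀ a ∈ T, a ≠ 0 → a - q ∈ T)
include hq hT

lemma sub_mul_mem_of_sub_mem (j : ℕ) : ∀ a ∈ T, j * q ≤ a → a - j * q ∈ T := by
  induction j with
  | zero => intro a ha _; simpa using ha
  | succ j ih =>
    intro a ha hj
    push_cast at hj
    have := ih (a - q) (hT a ha (by nlinarith)) (by linarith)
    rwa [show a - q - j * q = a - (j + 1) * q by ring] at this

lemma dvd_of_sub_mem (hnn : ∀ a ∈ T, 0 ≤ a) {a : ℤ} (ha : a ∈ T) : q ∣ a := by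
  have hj : ((a / q).toNat : ℤ) = a / q := Int.toNat_of_nonneg (Int.ediv_nonneg (hnn a ha) hq.le)
  have hr : a % q ∈ T := by
    have := sub_mul_mem_of_sub_mem hq hT (a / q).toNat a ha
      (by rw [hj]; exact Int.ediv_mul_le a hq.ne')
    rwa [hj, mul_comm, ← Int.emod_def] at this
  by_contra hqa
  have hr0 : a % q ≠ 0 := fun h => hqa (Int.dvd_of_emod_eq_zero h)
  have := hnn _ (hT _ hr hr0)
  have := Int.emod_lt_of_pos a hq
  omega

end Descent

lemma Icc_subset_of_sub_one_mem {T : Finset ℤ} (hT : ∀ a ∈ T, a ≠ 0 → a - 1 ∈ T) {a : ℤ}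
    (ha : a ∈ T) : Icc 0 a ⊆ T := fun b hb => by
  obtain ⟨hb0, hba⟩ := mem_Icc.1 hb
  have := sub_mul_mem_of_sub_mem one_pos hT (a - b).toNat a ha (by omega)
  rwa [Int.toNat_of_nonneg (by omega), mul_one, sub_sub_cancel] at this

lemma emod_eq_sub_of_le_of_lt {x z : ℤ} (hzx : z ≤ x) (hx : x < 2 * z) : x % z = x - z := by
  rw [← Int.sub_emod_right, Int.emod_eq_of_lt (by omega) (by omega)]

section ClosedModulo

variable {A : Finset ℤ} {z : ℤ} (hnn : ∀ x ∈ A, 0 ≤ x) (hlt : ∀ x ∈ A, x < z)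
include hnn hlt

lemma add_mem_or_add_sub_mem (hmod : ∀ t ∈ SetSub A, t % z ∈ A) {a b : ℤ} (ha : a ∈ A)
    (hb : b ∈ A) (hab : a ≠ b) :
    (a + b < z ∧ a + b ∈ A) ∨ (z ≤ a + b ∧ a + b - z ∈ A) := by
  have h := hmod _ (add_mem_setSub ha hb hab)
  have := hnn a ha; have := hnn b hb; have := hlt a ha; have := hlt b hb
  by_cases habz : a + b < z
  · exact .inl ⟨habz, by rwa [Int.emod_eq_of_lt (by omega) habz] at h⟩
  · exact .inr ⟨by omega, by rwa [emod_eq_sub_of_le_of_lt (by omega) (by omega)] at h⟩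

variable (hmod : ∀ t ∈ SetSub A, t % z ∈ A) {w : ℤ} (hw : ∀ x ∈ A, x ≤ w)
include hmod hw

lemma sub_mem_erase_of_emod_mem (hwA : w ∈ A) {a : ℤ} (ha : a ∈ A.erase w) (ha0 : a ≠ 0) :
    a - (z - w) ∈ A.erase w := by
  have haA := mem_of_mem_erase ha
  have := hnn a haA
  have := hlt a haA
  rcases add_mem_or_add_sub_mem hnn hlt hmod hwA haA (ne_of_mem_erase ha).symm with
    ⟨-, hmem⟩ | ⟨-, hmem⟩
  · have := hw _ hmem
    omega
  · exact mem_erase.2 ⟨by omega, by rwa [show w + a - z = a - (z - w) by ring] at hmem⟩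

lemma add_eq_or_add_sub_mem_erase {a b : ℤ} (ha : a ∈ A.erase w) (hb : b ∈ A.erase w)
    (hmax : ∀ x ∈ A.erase w, x ≤ a) (hb0 : 0 < b) (hba : b < a) :
    a + b = w ∨ (z ≤ a + b ∧ a + b - z ∈ A.erase w) := by
  have := hlt a (mem_of_mem_erase ha)
  have := hw b (mem_of_mem_erase hb)
  rcases add_mem_or_add_sub_mem hnn hlt hmod (mem_of_mem_erase ha) (mem_of_mem_erase hb)
    hba.ne' with ⟨-, hmem⟩ | ⟨hzab, hmem⟩
  · refine .inl (by_contra fun hne => ?_)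
    have := hmax _ (mem_erase.2 ⟨hne, hmem⟩)
    omega
  · have := hw a (mem_of_mem_erase ha)
    exact .inr ⟨hzab, mem_erase.2 ⟨by omega, hmem⟩⟩

end ClosedModulo

lemma exists_setSub_emod_not_mem {A : Finset ℤ} {z w : ℤ} (hnn : ∀ x ∈ A, 0 ≤ x)
    (hlt : ∀ x ∈ A, x < z) (hwA : w ∈ A) (hw : ∀ x ∈ A, x ≤ w)
    (hgcd : (insert z A).gcd id = 1) (hA : 4 ≤ #A) (hwA2 : 2 * (#A : ℤ) - 4 ≤ w) :
    ∃ t ∈ SetSub A, t % z ∉ A := by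
  by_contra! hmod
  set T := A.erase w
  have hstep : ∀ a ∈ T, a ≠ 0 → a - (z - w) ∈ T := fun _ =>
    sub_mem_erase_of_emod_mem hnn hlt hmod hw hwA
  have hqT : ∀ a ∈ T, z - w ∣ a := fun a ha =>
    dvd_of_sub_mem (by linarith [hlt w hwA]) hstep (fun x hx => hnn x (mem_of_mem_erase hx)) ha
  have hcardT : #T = #A - 1 := card_erase_of_mem hwA
  have hTne : T.Nonempty := card_pos.1 (by omega)
  set w₂ := T.max' hTne
  have hw₂ : w₂ ∈ T := max'_mem T hTne
  obtain ⟨w₃, hw₃, hw₃0⟩ :=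
    exists_mem_ne (s := T.erase w₂) (by rw [card_erase_of_mem hw₂]; omega) 0
  have hw₃T := mem_of_mem_erase hw₃
  have hw₃w₂ : w₃ < w₂ := lt_of_le_of_ne (le_max' T w₃ hw₃T) (ne_of_mem_erase hw₃)
  have hw₃pos : 0 < w₃ := lt_of_le_of_ne (hnn w₃ (mem_of_mem_erase hw₃T)) hw₃0.symm
  have hu := add_eq_or_add_sub_mem_erase hnn hlt hmod hw hw₂ hw₃T (fun x hx => le_max' T x hx)
    hw₃pos hw₃w₂
  have hqz : z - w ∣ z := by
    rcases hu with hu | ⟨-, hmem⟩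
    · simpa [← hu] using dvd_add (dvd_add (hqT w₂ hw₂) (hqT w₃ hw₃T)) (dvd_refl (z - w))
    · simpa using dvd_sub (dvd_add (hqT w₂ hw₂) (hqT w₃ hw₃T)) (hqT _ hmem)
  have hq1 : z - w = 1 := by
    refine eq_one_of_dvd_insert hgcd (by linarith [hlt w hwA]) hqz fun x hx => ?_
    by_cases hxw : x = w
    · simpa [hxw] using dvd_sub hqz (dvd_refl (z - w))
    · exact hqT x (mem_erase.2 ⟨hxw, hx⟩)
  have hw₂A := card_le_card (Icc_subset_of_sub_one_mem (hq1 ▸ hstep) hw₂)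
  rw [Int.card_Icc, hcardT] at hw₂A
  have := hw w₂ (mem_of_mem_erase hw₂)
  omega

lemma card_exitSums_ge_of_subset_Icc {A : Finset ℤ} {z w : ℤ} (h0 : 0 ∈ A) (hA : A ⊆ Icc 0 w)
    (hwz : w < z) : (#A : ℤ) + min (z - 1) (2 * #A - 3) - w ≤ #(exitSums A z) := by
  have hdisj : Disjoint A (Icc (w + 1) (min (z - 1) (2 * #A - 3))) :=
    disjoint_left.2 fun x hx hx' => by
      have := (mem_Icc.1 (hA hx)).2
      have := (mem_Icc.1 hx').1
      omega
  have hV := card_le_card_exitSums (z := z)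
    (V := A ∪ Icc (w + 1) (min (z - 1) (2 * #A - 3))) h0 (fun x hx => (mem_Icc.1 (hA hx)).1)
    (union_subset (fun x hx => mem_setSub_of_mem hx)
      ((Icc_subset_Icc_right (min_le_right _ _)).trans (Icc_subset_setSub ⟨0, h0⟩ hA)))
    fun v hv => by
      rcases mem_union.1 hv with hv | hv
      · have := (mem_Icc.1 (hA hv)).2; omega
      · have := (mem_Icc.1 hv).2; omega
  rw [card_union_of_disjoint hdisj, Int.card_Icc] at hV
  omega

lemma card_exitSums_ge_of_gcd_eq_one {A : Finset ℤ} {z w : ℤ} (h0 : 0 ∈ A)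
    (hnn : ∀ x ∈ A, 0 ≤ x) (hlt : ∀ x ∈ A, x < z) (hwA : w ∈ A) (hw : ∀ x ∈ A, x ≤ w)
    (hgcd : (insert z A).gcd id = 1) (hA : 4 ≤ #A) (hwA2 : 2 * (#A : ℤ) - 4 ≤ w) :
    #A + 1 ≤ #(exitSums A z) := by
  by_contra! hcard
  obtain ⟨t, ht, hmod⟩ := exists_setSub_emod_not_mem hnn hlt hwA hw hgcd hA hwA2
  exact hmod <| emod_mem_of_exitSums_eq h0 hnn hlt
    (exitSums_eq_image_of_card_le h0 hnn hlt (by omega)) ht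

lemma card_setSub_insert_ge_add_min {s : Finset ℤ} {z w : ℤ} {n : ℕ} (hn : 3 ≤ n)
    (h0 : 0 ∈ s) (hnn : ∀ x ∈ s, 0 ≤ x) (hlt : ∀ x ∈ s, x < z) (hwA : w ∈ s)
    (hw : ∀ x ∈ s, x ≤ w) (hgcd : (insert z s).gcd id = 1) (hcard : #s = n + 1)
    (ih : s.gcd id = 1 → (n : ℤ) * (n + 1) + 2 + 2 * min (w - n) (n - 3) ≤ 2 * #(SetSub s)) :
    ((n : ℤ) + 1) * (n + 1 + 1) + 2 + 2 * min (z - (n + 1)) (n + 1 - 3) ≤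
      2 * #(SetSub (insert z s)) := by
  have hinc := card_setSub_add_card_exitSums_le (fun hz => (hlt z hz).false)
  have hsw : s ⊆ Icc 0 w := fun x hx => mem_Icc.2 ⟨hnn x hx, hw x hx⟩
  have hwn := card_le_of_subset_Icc hsw
  have hwz := hlt w hwA
  by_cases hgs : s.gcd id = 1
  · have ih := ih hgs
    rcases le_or_gt w (2 * n - 3) with hw' | hw'
    · have hexit := card_exitSums_ge_of_subset_Icc h0 hsw hwz
      rw [hcard] at hexit
      rw [min_eq_left (by omega)] at ih
      push_cast at hexit
      have : min (z - (n + 1)) ((n : ℤ) + 1 - 3) ≤ min (z - 1) (2 * (n + 1) - 3) - w + (w - n) := by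
        omega
      linarith
    · have hexit := card_exitSums_ge_of_gcd_eq_one h0 hnn hlt hwA hw hgcd (by omega) (by omega)
      rw [hcard] at hexit
      rw [min_eq_right (by omega)] at ih
      zify at hexit
      have : min (z - (n + 1)) ((n : ℤ) + 1 - 3) ≤ n - 2 := by omega
      linarith
  · have hg : ¬ s.gcd id ∣ z := fun hgz => hgs <|
      eq_one_of_dvd_insert hgcd (Int.nonneg_of_normalize_eq_self normalize_gcd) hgz
        fun x hx => gcd_dvd hx
    rw [exitSums_eq_setSub (fun x hx => gcd_dvd hx) hg] at hinc
    have := card_setSub_ge h0 hnn n hcard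
    have : min (z - (n + 1)) ((n : ℤ) + 1 - 3) ≤ n - 2 := by omega
    nlinarith

theorem card_setSub_ge_add_min {A : Finset ℤ} (h0 : 0 ∈ A) (hnn : ∀ x ∈ A, 0 ≤ x)
    (hgcd : A.gcd id = 1) {z : ℤ} (hzA : z ∈ A) (hz : ∀ x ∈ A, x ≤ z) (n : ℕ) (hn : 3 ≤ n)
    (hcard : #A = n + 1) :
    (n : ℤ) * (n + 1) + 2 + 2 * min (z - n) (n - 3) ≤ 2 * #(SetSub A) := by
  induction n, hn using Nat.le_induction generalizing A z with
  | base =>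
    have := card_setSub_ge h0 hnn 3 hcard
    push_cast
    omega
  | succ n hn ih =>
    set s := A.erase z
    have hlt : ∀ x ∈ s, x < z := fun x hx =>
      lt_of_le_of_ne (hz x (mem_of_mem_erase hx)) (ne_of_mem_erase hx)
    have hzn := card_le_of_subset_Icc fun x hx => mem_Icc.2 ⟨hnn x hx, hz x hx⟩
    have h0s : 0 ∈ s := mem_erase.2 ⟨by omega, h0⟩
    have hnns : ∀ x ∈ s, 0 ≤ x := fun x hx => hnn x (mem_of_mem_erase hx)
    have hsne : s.Nonempty := ⟨0, h0s⟩
    have hw : ∀ x ∈ s, x ≤ s.max' hsne := fun x hx => le_max' s x hx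
    have hcards : #s = n + 1 := by rw [card_erase_of_mem hzA, hcard]; rfl
    rw [← insert_erase hzA] at hgcd ⊢
    push_cast
    exact card_setSub_insert_ge_add_min hn h0s hnns hlt (max'_mem s hsne) hw hgcd hcards
      fun hgs => ih h0s hnns hgs (max'_mem s hsne) hw hcards

lemma theta_le : theta ≤ 7 / 4 := by
  have h5 : Real.sqrt 5 ≤ 5 / 2 := Real.sqrt_le_iff.2 ⟨by norm_num, by norm_num⟩
  unfold theta
  linarith

theorem freiman_subset_sum_zero (k : ℕ) (hk : 4 ≤ k) (a : ℕ → ℤ) (h0 : a 0 = 0)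
    (ha : ∀ i j, i < j → j ≤ k - 1 → a i < a j)
    (hgcd : (Finset.range k).gcd a = 1) :
    (a (k - 1) ≤ 2 * (k : ℤ) - 5 →
      a (k - 1) + ((k : ℤ) - 1) * ((k : ℤ) - 2) / 2 + 1
        ≤ ((SetSub ((Finset.range k).image a)).card : ℤ)) ∧
    (2 * (k : ℤ) - 4 ≤ a (k - 1) →
      theta * (k : ℝ) - 3 + ((k : ℝ) - 1) * ((k : ℝ) - 2) / 2
        ≤ ((SetSub ((Finset.range k).image a)).card : ℝ)) := by
  obtain ⟨n, rfl⟩ : ∃ n, k = n + 1 := ⟨k - 1, by omega⟩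
  simp only [add_tsub_cancel_right] at ha ⊢
  have hmono : StrictMonoOn a (range (n + 1)) := fun i _ j hj hij =>
    ha i j hij (Nat.lt_succ_iff.1 (mem_range.1 hj))
  have hn : n ∈ range (n + 1) := self_mem_range_succ n
  have hle : ∀ i ∈ range (n + 1), 0 ≤ a i ∧ a i ≤ a n := fun i hi =>
    ⟨h0 ▸ (hmono.le_iff_le (mem_range.2 n.succ_pos) hi).2 i.zero_le,
      (hmono.le_iff_le hi hn).2 (Nat.lt_succ_iff.1 (mem_range.1 hi))⟩
  have hbound := card_setSub_ge_add_min (A := (range (n + 1)).image a)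
    (h0 ▸ mem_image_of_mem a (mem_range.2 n.succ_pos))
    (forall_mem_image.2 fun i hi => (hle i hi).1) (by rwa [gcd_image])
    (mem_image_of_mem a hn) (forall_mem_image.2 fun i hi => (hle i hi).2) n (by omega)
    (card_image_of_injOn hmono.injOn ▸ card_range (n + 1))
  push_cast
  refine ⟨fun hsmall => ?_, fun hlarge => ?_⟩
  · rw [min_eq_left (by omega)] at hbound
    have := Int.ediv_mul_le ((n + 1 - 1) * (n + 1 - 2) : ℤ) two_ne_zero
    linarith
  · rw [min_eq_right (by omega)] at hbound
    have hR : (n : ℝ) * (n + 1) + 2 + 2 * (n - 3) ≤ 2 * #(SetSub ((range (n + 1)).image a)) := by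
      exact_mod_cast hbound
    have hn3 : (3 : ℝ) ≤ n := by exact_mod_cast (by omega : 3 ≤ n)
    nlinarith [mul_le_mul_of_nonneg_right theta_le (by positivity : (0 : ℝ) ≤ n + 1)]
end

section
/- Let 𝔸 be a finite sequence (multiset) of positive integers whose distinct values are a_1 < a_2 < ... < a_k, with a_i appearing r_i ≥ 1 times. Then |S(𝔸)| ≥ Σ_{i=1}^{k} i·r_i. -/
open Pointwise

theorem subsequence_sum_lower_bound (k : ℕ) (a : ℕ → ℤ) (r : ℕ → ℕ)
    (ha : ∀ i j, 1 ≤ i → i < j → j ≤ k → a i < a j)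
    (hpos : ∀ i, 1 ≤ i → i ≤ k → 0 < a i)
    (hr : ∀ i, 1 ≤ i → i ≤ k → 1 ≤ r i) :
    ∑ i ∈ Finset.Icc 1 k, i * r i ≤
      (SeqSub (∑ i ∈ Finset.Icc 1 k, Multiset.replicate (r i) (a i))).card := by
  classical
  set A : Multiset ℤ := ∑ i ∈ Finset.Icc 1 k, Multiset.replicate (r i) (a i) with hA
  set F : ℕ → ℤ := fun n => ∑ t ∈ Finset.Icc 1 n, (r t : ℤ) * a t with hF
  set φ : (_ : ℕ) × ℕ × ℕ → ℤ :=
    fun x => F (x.1 - 1) + (x.2.1 : ℤ) * a x.1 - (if x.2.2 = 0 then 0 else a x.2.2) with hφ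
  set I : Finset ((_ : ℕ) × ℕ × ℕ) :=
    (Finset.Icc 1 k).sigma (fun i => Finset.Icc 1 (r i) ×ˢ Finset.range i) with hI
  have hcard : I.card = ∑ i ∈ Finset.Icc 1 k, i * r i := by
    rw [hI, Finset.card_sigma]
    refine Finset.sum_congr rfl fun i hi => ?_
    rw [Finset.card_product, Nat.card_Icc, Finset.card_range, Nat.add_sub_cancel, Nat.mul_comm]
  -- basic bounds on membership
  have hmem : ∀ x : (_ : ℕ) × ℕ × ℕ, x ∈ I →
      1 ≤ x.1 ∧ x.1 ≤ k ∧ 1 ≤ x.2.1 ∧ x.2.1 ≤ r x.1 ∧ x.2.2 < x.1 := by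
    rintro ⟨i, m, j⟩ hx
    simp only [hI, Finset.mem_sigma, Finset.mem_Icc, Finset.mem_product, Finset.mem_range] at hx
    exact ⟨hx.1.1, hx.1.2, hx.2.1.1, hx.2.1.2, hx.2.2⟩
  -- F is monotone up to k
  have hFmono : ∀ n n', n ≤ n' → n' ≤ k → F n ≤ F n' := by
    intro n n' h1 h2
    refine Finset.sum_le_sum_of_subset_of_nonneg (Finset.Icc_subset_Icc_right h1) ?_
    intro t ht _
    simp only [Finset.mem_Icc] at ht
    exact mul_nonneg (Int.natCast_nonneg _) (le_of_lt (hpos t ht.1 (le_trans ht.2 h2)))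
  -- F i = F (i-1) + r i * a i for 1 ≤ i
  have hFstep : ∀ i, 1 ≤ i → F i = F (i - 1) + (r i : ℤ) * a i := by
    intro i hi
    obtain ⟨n, rfl⟩ := Nat.exists_eq_add_of_le hi
    simp only [hF]
    rw [Nat.add_comm 1 n, Finset.sum_Icc_succ_top (Nat.le_add_left 1 n)]
    simp
  -- subtracted term bounds
  have hsub : ∀ i j : ℕ, j < i → i ≤ k →
      0 ≤ (if j = 0 then (0:ℤ) else a j) ∧ (if j = 0 then (0:ℤ) else a j) < a i := by
    intro i j hj hik
    rcases Nat.eq_zero_or_pos j with h0 | h0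
    · subst h0
      rw [if_pos rfl]
      exact ⟨le_refl 0, hpos i hj hik⟩
    · have hne : j ≠ 0 := Nat.pos_iff_ne_zero.mp h0
      simp only [hne, if_neg]
      constructor
      · exact le_of_lt (hpos j h0 (le_trans (le_of_lt hj) hik))
      · exact ha j i h0 hj hik
  -- strict monotonicity
  have hlt : ∀ x ∈ I, ∀ y ∈ I,
      (x.1 < y.1 ∨ (x.1 = y.1 ∧ (x.2.1 < y.2.1 ∨ (x.2.1 = y.2.1 ∧ y.2.2 < x.2.2)))) →
      φ x < φ y := by
    rintro ⟨i, m, j⟩ hx ⟨i', m', j'⟩ hy hcases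
    obtain ⟨hi1, hik, hm1, hmr, hji⟩ := hmem _ hx
    obtain ⟨hi1', hik', hm1', hmr', hji'⟩ := hmem _ hy
    obtain ⟨hs0, hsa⟩ := hsub i j hji hik
    obtain ⟨hs0', hsa'⟩ := hsub i' j' hji' hik'
    simp only [hφ]
    rcases hcases with h | ⟨rfl, h⟩
    · -- i < i'
      have h1 : F (i-1) + (m:ℤ) * a i - (if j = 0 then 0 else a j) ≤ F i := by
        rw [hFstep i hi1]
        have : (m:ℤ) * a i ≤ (r i : ℤ) * a i :=
          mul_le_mul_of_nonneg_right (by exact_mod_cast hmr) (le_of_lt (hpos i hi1 hik))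
        linarith
      have h2 : F i ≤ F (i' - 1) := hFmono i (i'-1) (Nat.le_sub_one_of_lt h) (Nat.sub_le_of_le_add (le_trans hik' (Nat.le_add_right k 1)))
      have h3 : F (i'-1) < F (i'-1) + (m':ℤ) * a i' - (if j' = 0 then 0 else a j') := by
        have : a i' ≤ (m':ℤ) * a i' := by
          nlinarith [hpos i' hi1' hik', (by exact_mod_cast hm1' : (1:ℤ) ≤ (m':ℤ))]
        linarith
      linarith
    · rcases h with h | ⟨rfl, h⟩
      · -- same i, m < m'
        have hmm : (m:ℤ) + 1 ≤ (m':ℤ) := by exact_mod_cast h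
        nlinarith [hpos i hi1 hik]
      · -- same i,m ; j' < j
        have : (if j' = 0 then (0:ℤ) else a j') < (if j = 0 then (0:ℤ) else a j) := by
          have hj0 : j ≠ 0 := Nat.pos_iff_ne_zero.mp (Nat.lt_of_le_of_lt (Nat.zero_le j') h)
          simp only [hj0, if_neg]
          rcases Nat.eq_zero_or_pos j' with h0 | h0
          · simp [h0]
            exact hpos j (Nat.pos_iff_ne_zero.mpr hj0) (le_trans (le_of_lt hji) hik)
          · have hne' : j' ≠ 0 := Nat.pos_iff_ne_zero.mp h0
            simp only [hne', if_neg]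
            exact ha j' j h0 h (le_trans (le_of_lt hji) hik)
        linarith
  -- injectivity
  have hinj : Set.InjOn φ I := by
    rintro ⟨i, m, j⟩ hx ⟨i', m', j'⟩ hy hxy
    by_contra hne
    rcases Nat.lt_trichotomy i i' with h | rfl | h
    · exact absurd hxy (ne_of_lt (hlt _ hx _ hy (Or.inl h)))
    · rcases Nat.lt_trichotomy m m' with h | rfl | h
      · exact absurd hxy (ne_of_lt (hlt _ hx _ hy (Or.inr ⟨rfl, Or.inl h⟩)))
      · rcases Nat.lt_trichotomy j j' with h | rfl | h
        · exact absurd hxy (ne_of_gt (hlt _ hy _ hx (Or.inr ⟨rfl, Or.inr ⟨rfl, h⟩⟩)))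
        · exact hne rfl
        · exact absurd hxy (ne_of_lt (hlt _ hx _ hy (Or.inr ⟨rfl, Or.inr ⟨rfl, h⟩⟩)))
      · exact absurd hxy (ne_of_gt (hlt _ hy _ hx (Or.inr ⟨rfl, Or.inl h⟩)))
    · exact absurd hxy (ne_of_gt (hlt _ hy _ hx (Or.inl h)))
  -- membership of φ x in SeqSub A
  have hmaps : ∀ x ∈ I, φ x ∈ SeqSub A := by
    rintro ⟨i, m, j⟩ hx
    obtain ⟨hi1, hik, hm1, hmr, hji⟩ := hmem _ hx
    set B : Multiset ℤ :=
      (∑ t ∈ Finset.Icc 1 (i-1), Multiset.replicate (r t - if t = j then 1 else 0) (a t))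
        + Multiset.replicate m (a i) with hB
    have hBle : B ≤ A := by
      have step1 : B ≤ (∑ t ∈ Finset.Icc 1 (i-1), Multiset.replicate (r t) (a t))
          + Multiset.replicate (r i) (a i) := by
        refine add_le_add ?_ ?_
        · refine Finset.sum_le_sum fun t ht => ?_
          exact (Multiset.replicate_le_replicate (a t)).mpr (Nat.sub_le _ _)
        · exact (Multiset.replicate_le_replicate (a i)).mpr hmr
      have step2 : (∑ t ∈ Finset.Icc 1 (i-1), Multiset.replicate (r t) (a t))
          + Multiset.replicate (r i) (a i) = ∑ t ∈ Finset.Icc 1 i, Multiset.replicate (r t) (a t) := by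
        obtain ⟨n, rfl⟩ := Nat.exists_eq_add_of_le hi1
        rw [Nat.add_comm 1 n, Finset.sum_Icc_succ_top (Nat.le_add_left 1 n)]
        simp
      have step3 : (∑ t ∈ Finset.Icc 1 i, Multiset.replicate (r t) (a t)) ≤ A := by
        rw [hA]
        exact Finset.sum_le_sum_of_subset (Finset.Icc_subset_Icc_right hik)
      calc B ≤ _ := step1
        _ = _ := step2
        _ ≤ A := step3
    have hBne : B ≠ 0 := by
      have hmemai : a i ∈ B := by
        rw [hB]
        exact Multiset.mem_add.mpr (Or.inr (Multiset.mem_replicate.mpr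
          ⟨Nat.pos_iff_ne_zero.mp hm1, rfl⟩))
      intro h0
      rw [h0] at hmemai
      exact Multiset.notMem_zero _ hmemai
    have hBsum : B.sum = φ ⟨i, m, j⟩ := by
      simp only [hB, Multiset.sum_add, Multiset.sum_sum, Multiset.sum_replicate, nsmul_eq_mul, hφ]
      have hcast : ∀ t ∈ Finset.Icc 1 (i-1),
          ((r t - if t = j then 1 else 0 : ℕ) : ℤ) * a t
            = (r t : ℤ) * a t - (if t = j then 1 else 0) * a t := by
        intro t ht
        simp only [Finset.mem_Icc] at ht
        have hrt : 1 ≤ r t := hr t ht.1 (le_trans ht.2 (Nat.sub_le_of_le_add (le_trans hik (Nat.le_add_right k 1))))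
        rcases eq_or_ne t j with rfl | hne
        · rw [if_pos rfl, if_pos rfl, Nat.cast_sub hrt]
          push_cast
          ring
        · simp [hne]
      rw [Finset.sum_congr rfl hcast, Finset.sum_sub_distrib]
      have hdelta : ∑ t ∈ Finset.Icc 1 (i-1), (if t = j then (1:ℤ) else 0) * a t
          = (if j = 0 then 0 else a j) := by
        rcases Nat.eq_zero_or_pos j with h0 | h0
        · subst h0
          rw [Finset.sum_eq_zero, if_pos rfl]
          intro t ht
          simp only [Finset.mem_Icc] at ht
          simp [Nat.pos_iff_ne_zero.mp ht.1]
        · have hjmem : j ∈ Finset.Icc 1 (i-1) := by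
            simp only [Finset.mem_Icc]
            exact ⟨h0, Nat.le_sub_one_of_lt hji⟩
          rw [if_neg (Nat.pos_iff_ne_zero.mp h0)]
          rw [Finset.sum_eq_single j]
          · simp
          · intro t ht hne; simp [hne]
          · intro h; exact absurd hjmem h
      rw [hdelta, hF]
      ring
    rw [SeqSub, Multiset.mem_toFinset, Multiset.mem_map]
    exact ⟨B, Multiset.mem_filter.mpr ⟨Multiset.mem_powerset.mpr hBle, hBne⟩, hBsum⟩
  calc ∑ i ∈ Finset.Icc 1 k, i * r i = I.card := hcard.symm
    _ ≤ (SeqSub A).card := Finset.card_le_card_of_injOn φ hmaps hinj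
end

section
/- Let k ≥ 4 and let 𝔸 be a finite multiset of positive integers with distinct values a_1 < ... < a_k and multiplicities r_1, ..., r_k ≥ 1. If |S(𝔸)| = Σ_{i=1}^{k} i·r_i, then a_i = i·d for all i and some positive integer d. -/
open Pointwise

/-!
Write `A_m = seg a r m` for the multiset of the first `m` values with their multiplicities
and `L_m` for its sum. Removing from `A_m` nothing or one of `a_1, …, a_m` and adding `t ∈ [1, r_{m+1}]`
copies of `a_{m+1}` gives `(m + 1) r_{m+1}` distinct sums, all larger than `L_m`. Hence
`|S(A_{m+1})| ≥ |S(A_m)| + (m + 1) r_{m+1}`, and when `|S(A_k)|` is minimal, `S(A_{m+1})`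
consists exactly of `S(A_m)` and these fresh sums for every `m < k`. Two rigidity facts follow:
a sub-sum of `A_m` below `a_{m+1}` is a single `a_j`, and no sub-sum of `A_m` lies strictly
between `a_{m+1}` and `a_{m+1} + a_1`. Applied to `a_1 + a_m` they give `a_{m+1} = a_1 + a_m`
for `m ≥ 2`; the remaining equation `a_2 = 2 a_1` uses `k ≥ 4` and a case analysis on
`r_1, r_2`.
-/

namespace SubseqSum

def seg (a : ℕ → ℤ) (r : ℕ → ℕ) (m : ℕ) : Multiset ℤ :=
  ∑ i ∈ Finset.Icc 1 m, Multiset.replicate (r i) (a i)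

def removable (a : ℕ → ℤ) (m : ℕ) : Finset ℤ :=
  insert 0 ((Finset.Icc 1 m).image a)

-- Drop `y ∈ removable a m` from `seg a r m` and add `t ≥ 1` copies of `a (m + 1)`.
def fresh (a : ℕ → ℤ) (r : ℕ → ℕ) (m : ℕ) : Finset ℤ :=
  (Finset.Icc 1 (r (m + 1)) ×ˢ removable a m).image
    fun p => (seg a r m).sum + p.1 * a (m + 1) - p.2

structure Admissible (k : ℕ) (a : ℕ → ℤ) (r : ℕ → ℕ) : Prop where
  strictMonoOn : StrictMonoOn a (Set.Icc 1 k)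
  a_one_pos : 0 < a 1
  one_le_r : ∀ i ∈ Finset.Icc 1 k, 1 ≤ r i

structure Extremal (k : ℕ) (a : ℕ → ℤ) (r : ℕ → ℕ) : Prop
    extends Admissible k a r where
  card_eq : (SeqSub (seg a r k)).card = ∑ i ∈ Finset.Icc 1 k, i * r i

theorem mem_seqSub {A : Multiset ℤ} {x : ℤ} :
    x ∈ SeqSub A ↔ ∃ B ≤ A, B ≠ 0 ∧ B.sum = x := by
  simp [SeqSub, and_assoc]

theorem seqSub_mono {A A' : Multiset ℤ} (h : A ≤ A') : SeqSub A ⊆ SeqSub A' := by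
  intro x hx
  obtain ⟨B, hB, hne, rfl⟩ := mem_seqSub.1 hx
  exact mem_seqSub.2 ⟨B, hB.trans h, hne, rfl⟩

@[simp]
theorem seqSub_zero : SeqSub 0 = ∅ := rfl

theorem sum_tsub_of_le {A B : Multiset ℤ} (h : B ≤ A) : (A - B).sum = A.sum - B.sum :=
  eq_sub_of_add_eq (by rw [← Multiset.sum_add, tsub_add_cancel_of_le h])

variable {k m : ℕ} {a : ℕ → ℤ} {r : ℕ → ℕ}

@[simp]
theorem seg_zero : seg a r 0 = 0 := rfl

theorem seg_succ : seg a r (m + 1) = seg a r m + Multiset.replicate (r (m + 1)) (a (m + 1)) :=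
  Finset.sum_Icc_succ_top (Nat.le_add_left 1 m) _

theorem sum_seg_succ : (seg a r (m + 1)).sum = (seg a r m).sum + r (m + 1) * a (m + 1) := by
  simp [seg_succ, Multiset.sum_replicate]

theorem exists_eq_of_mem_seg {b : ℤ} (hb : b ∈ seg a r m) :
    ∃ i ∈ Finset.Icc 1 m, a i = b := by
  obtain ⟨i, hi, hb⟩ := Multiset.mem_sum.1 hb
  exact ⟨i, hi, (Multiset.eq_of_mem_replicate hb).symm⟩

theorem sub_add_mem_seqSub_succ {B : Multiset ℤ} {t : ℕ} (hB : B ≤ seg a r m)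
    (ht : t ∈ Finset.Icc 1 (r (m + 1))) :
    (seg a r m).sum - B.sum + t * a (m + 1) ∈ SeqSub (seg a r (m + 1)) := by
  rw [Finset.mem_Icc] at ht
  refine mem_seqSub.2 ⟨(seg a r m - B) + Multiset.replicate t (a (m + 1)), ?_, ?_, ?_⟩
  · rw [seg_succ]
    exact add_le_add (Multiset.sub_le_self _ _) (Multiset.replicate_mono _ ht.2)
  · rw [← Multiset.card_pos, Multiset.card_add, Multiset.card_replicate]
    omega
  · simp [sum_tsub_of_le hB, Multiset.sum_replicate]

theorem mem_fresh {x : ℤ} : x ∈ fresh a r m ↔ ∃ t ∈ Finset.Icc 1 (r (m + 1)),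
    ∃ y ∈ removable a m, (seg a r m).sum + t * a (m + 1) - y = x := by
  simp [fresh, and_assoc]

namespace Admissible

variable {i j : ℕ} {B : Multiset ℤ}

theorem a_le (H : Admissible k a r) (hi : 1 ≤ i) (hij : i ≤ j) (hj : j ≤ k) : a i ≤ a j :=
  H.strictMonoOn.monotoneOn ⟨hi, hij.trans hj⟩ ⟨hi.trans hij, hj⟩ hij

theorem a_lt (H : Admissible k a r) (hi : 1 ≤ i) (hij : i < j) (hj : j ≤ k) : a i < a j :=
  H.strictMonoOn ⟨hi, hij.le.trans hj⟩ ⟨by omega, hj⟩ hij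

theorem a_pos (H : Admissible k a r) (hi : 1 ≤ i) (hik : i ≤ k) : 0 < a i :=
  H.a_one_pos.trans_le (H.a_le le_rfl hi hik)

theorem a_one_le_of_mem_seg (H : Admissible k a r) (hm : m ≤ k) {b : ℤ} (hb : b ∈ seg a r m) :
    a 1 ≤ b := by
  obtain ⟨i, hi, rfl⟩ := exists_eq_of_mem_seg hb
  rw [Finset.mem_Icc] at hi
  exact H.a_le le_rfl hi.1 (hi.2.trans hm)

theorem sum_nonneg (H : Admissible k a r) (hm : m ≤ k) (hB : B ≤ seg a r m) : 0 ≤ B.sum :=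
  Multiset.sum_nonneg fun _ hb =>
    H.a_one_pos.le.trans (H.a_one_le_of_mem_seg hm (Multiset.mem_of_le hB hb))

theorem a_one_le_sum (H : Admissible k a r) (hm : m ≤ k) (hB : B ≤ seg a r m) (hne : B ≠ 0) :
    a 1 ≤ B.sum := by
  obtain ⟨b, hb⟩ := Multiset.exists_mem_of_ne_zero hne
  rw [← Multiset.cons_erase hb, Multiset.sum_cons]
  have := H.a_one_le_of_mem_seg hm (Multiset.mem_of_le hB hb)
  have := H.sum_nonneg hm ((Multiset.erase_le b B).trans hB)
  linarith

theorem sum_le_sum_seg (H : Admissible k a r) (hm : m ≤ k) (hB : B ≤ seg a r m) :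
    B.sum ≤ (seg a r m).sum := by
  have := H.sum_nonneg hm (Multiset.sub_le_self (seg a r m) B)
  rw [sum_tsub_of_le hB] at this
  linarith

theorem le_sum_seg_of_mem (H : Admissible k a r) (hm : m ≤ k) {x : ℤ}
    (hx : x ∈ SeqSub (seg a r m)) : x ≤ (seg a r m).sum := by
  obtain ⟨B, hB, -, rfl⟩ := mem_seqSub.1 hx
  exact H.sum_le_sum_seg hm hB

theorem singleton_le_seg (H : Admissible k a r) (hm : m ≤ k) (hi : i ∈ Finset.Icc 1 m) :
    {a i} ≤ seg a r m := by
  have hr := H.one_le_r i (Finset.Icc_subset_Icc_right hm hi)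
  calc {a i} ≤ Multiset.replicate (r i) (a i) :=
        Multiset.singleton_le.2 (Multiset.mem_replicate.2 ⟨by omega, rfl⟩)
    _ ≤ seg a r m :=
        Finset.single_le_sum (f := fun l => Multiset.replicate (r l) (a l))
          (fun _ _ => zero_le) hi

theorem pair_le_seg (H : Admissible k a r) (hm : m ≤ k) (hi : i ∈ Finset.Icc 1 m)
    (hj : j ∈ Finset.Icc 1 m) (hij : i ≠ j) : a i ::ₘ {a j} ≤ seg a r m := by
  have hri := H.one_le_r i (Finset.Icc_subset_Icc_right hm hi)
  have hrj := H.one_le_r j (Finset.Icc_subset_Icc_right hm hj)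
  calc a i ::ₘ {a j} = {a i} + {a j} := rfl
    _ ≤ Multiset.replicate (r i) (a i) + Multiset.replicate (r j) (a j) :=
        add_le_add (Multiset.singleton_le.2 (Multiset.mem_replicate.2 ⟨by omega, rfl⟩))
          (Multiset.singleton_le.2 (Multiset.mem_replicate.2 ⟨by omega, rfl⟩))
    _ = ∑ l ∈ {i, j}, Multiset.replicate (r l) (a l) :=
        (Finset.sum_pair (f := fun l => Multiset.replicate (r l) (a l)) hij).symm
    _ ≤ seg a r m := Finset.sum_le_sum_of_subset (Finset.insert_subset hi (by simpa using hj))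

theorem add_mem_seqSub (H : Admissible k a r) (hm : m ≤ k) (hi : i ∈ Finset.Icc 1 m)
    (hj : j ∈ Finset.Icc 1 m) (hij : i ≠ j) : a i + a j ∈ SeqSub (seg a r m) :=
  mem_seqSub.2 ⟨_, H.pair_le_seg hm hi hj hij, Multiset.cons_ne_zero, by simp⟩

theorem one_le_r_succ (H : Admissible k a r) (hm : m < k) : 1 ≤ r (m + 1) :=
  H.one_le_r _ (Finset.mem_Icc.2 ⟨by omega, hm⟩)

theorem mem_removable_bounds (H : Admissible k a r) (hm : m < k) {y : ℤ}
    (hy : y ∈ removable a m) : 0 ≤ y ∧ y < a (m + 1) := by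
  rcases Finset.mem_insert.1 hy with rfl | hy
  · exact ⟨le_rfl, H.a_pos (by omega) hm⟩
  · obtain ⟨j, hj, rfl⟩ := Finset.mem_image.1 hy
    rw [Finset.mem_Icc] at hj
    exact ⟨(H.a_pos hj.1 (by omega)).le, H.a_lt hj.1 (by omega) hm⟩

theorem card_removable (H : Admissible k a r) (hm : m ≤ k) : (removable a m).card = m + 1 := by
  rw [removable, Finset.card_insert_of_notMem, Finset.card_image_of_injOn, Nat.card_Icc,
    Nat.add_sub_cancel]
  · exact H.strictMonoOn.injOn.mono fun i hi => by
      simp only [Finset.coe_Icc, Set.mem_Icc] at hi ⊢; omega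
  · intro h
    obtain ⟨j, hj, hj0⟩ := Finset.mem_image.1 h
    rw [Finset.mem_Icc] at hj
    exact (H.a_pos hj.1 (hj.2.trans hm)).ne' hj0

theorem lt_of_mem_fresh (H : Admissible k a r) (hm : m < k) {x : ℤ} (hx : x ∈ fresh a r m) :
    (seg a r m).sum < x := by
  obtain ⟨t, ht, y, hy, rfl⟩ := mem_fresh.1 hx
  have hy := H.mem_removable_bounds hm hy
  have : a (m + 1) ≤ t * a (m + 1) :=
    le_mul_of_one_le_left (H.a_pos (by omega) hm).le (by exact_mod_cast (Finset.mem_Icc.1 ht).1)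
  linarith

theorem card_fresh (H : Admissible k a r) (hm : m < k) :
    (fresh a r m).card = (m + 1) * r (m + 1) := by
  rw [fresh, Finset.card_image_of_injOn, Finset.card_product, H.card_removable hm.le,
    Nat.card_Icc, Nat.add_sub_cancel, mul_comm]
  rintro ⟨t, y⟩ hp ⟨t', y'⟩ hp' h
  simp only [Finset.coe_product, Set.mem_prod, Finset.mem_coe] at hp hp' h
  have hy := H.mem_removable_bounds hm hp.2
  have hy' := H.mem_removable_bounds hm hp'.2
  have hdvd : a (m + 1) ∣ y' - y := ⟨t' - t, by linarith⟩
  have hyy : y' - y = 0 :=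
    Int.eq_zero_of_abs_lt_dvd hdvd (abs_sub_lt_iff.2 ⟨by linarith, by linarith⟩)
  have htt : (t : ℤ) = t' := mul_right_cancel₀ (H.a_pos (by omega) hm).ne' (by linarith)
  simp only [Prod.mk.injEq]
  exact ⟨by exact_mod_cast htt, by linarith⟩

theorem fresh_subset (H : Admissible k a r) (hm : m < k) :
    fresh a r m ⊆ SeqSub (seg a r (m + 1)) := by
  intro x hx
  obtain ⟨t, ht, y, hy, rfl⟩ := mem_fresh.1 hx
  obtain ⟨B, hB, rfl⟩ : ∃ B ≤ seg a r m, B.sum = y := by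
    rcases Finset.mem_insert.1 hy with rfl | hy
    · exact ⟨0, Multiset.zero_le _, Multiset.sum_zero⟩
    · obtain ⟨j, hj, rfl⟩ := Finset.mem_image.1 hy
      exact ⟨{a j}, H.singleton_le_seg hm.le hj, Multiset.sum_singleton _⟩
  convert sub_add_mem_seqSub_succ hB ht using 1
  ring

theorem disjoint_fresh (H : Admissible k a r) (hm : m < k) :
    Disjoint (SeqSub (seg a r m)) (fresh a r m) :=
  Finset.disjoint_left.2 fun _ hx hx' =>
    (H.le_sum_seg_of_mem hm.le hx).not_gt (H.lt_of_mem_fresh hm hx')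

theorem union_fresh_subset (H : Admissible k a r) (hm : m < k) :
    SeqSub (seg a r m) ∪ fresh a r m ⊆ SeqSub (seg a r (m + 1)) :=
  Finset.union_subset (seqSub_mono (seg_succ (a := a) ▸ Multiset.le_add_right _ _))
    (H.fresh_subset hm)

theorem card_union_fresh (H : Admissible k a r) (hm : m < k) :
    (SeqSub (seg a r m) ∪ fresh a r m).card =
      (SeqSub (seg a r m)).card + (m + 1) * r (m + 1) := by
  rw [Finset.card_union_of_disjoint (H.disjoint_fresh hm), H.card_fresh hm]

end Admissible

namespace Extremal

variable {x : ℤ} {B : Multiset ℤ}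

theorem card_seqSub_eq (E : Extremal k a r) (hm : m ≤ k) :
    (SeqSub (seg a r m)).card = ∑ i ∈ Finset.Icc 1 m, i * r i := by
  set d : ℕ → ℤ := fun n =>
    ((SeqSub (seg a r n)).card : ℤ) - ∑ i ∈ Finset.Icc 1 n, (i * r i : ℕ)
  have hmono : MonotoneOn d (Set.Iic k) :=
    monotoneOn_of_le_succ Set.ordConnected_Iic fun n _ _ hn => by
      rw [Order.succ_eq_add_one, Set.mem_Iic] at *
      have := E.card_union_fresh hn ▸ Finset.card_le_card (E.union_fresh_subset hn)
      simp only [d, Finset.sum_Icc_succ_top (Nat.le_add_left 1 n)]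
      push_cast at this ⊢
      linarith
  have h0 := hmono (Set.mem_Iic.2 (Nat.zero_le k)) (Set.mem_Iic.2 hm) (Nat.zero_le m)
  have hk := hmono (Set.mem_Iic.2 hm) (Set.mem_Iic.2 le_rfl) hm
  simp only [d, seg_zero, seqSub_zero, E.card_eq, Finset.card_empty,
    Finset.Icc_eq_empty_of_lt zero_lt_one, Finset.sum_empty, sub_self, CharP.cast_eq_zero] at h0 hk
  omega

theorem seqSub_succ_eq (E : Extremal k a r) (hm : m < k) :
    SeqSub (seg a r (m + 1)) = SeqSub (seg a r m) ∪ fresh a r m := by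
  refine (Finset.eq_of_subset_of_card_le (E.union_fresh_subset hm) ?_).symm
  rw [E.card_union_fresh hm, E.card_seqSub_eq hm, E.card_seqSub_eq hm.le,
    Finset.sum_Icc_succ_top (Nat.le_add_left 1 m)]

theorem mem_of_mem_succ (E : Extremal k a r) (hm : m < k) (hx : x ∈ SeqSub (seg a r (m + 1)))
    (hle : x ≤ (seg a r m).sum) : x ∈ SeqSub (seg a r m) := by
  rw [E.seqSub_succ_eq hm, Finset.mem_union] at hx
  exact hx.resolve_right fun h => (E.lt_of_mem_fresh hm h).not_ge hle

theorem mem_fresh_of_mem_succ (E : Extremal k a r) (hm : m < k)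
    (hx : x ∈ SeqSub (seg a r (m + 1))) (hlt : (seg a r m).sum < x) : x ∈ fresh a r m := by
  rw [E.seqSub_succ_eq hm, Finset.mem_union] at hx
  exact hx.resolve_left fun h => (E.le_sum_seg_of_mem hm.le h).not_gt hlt

theorem exists_a_eq_of_lt (E : Extremal k a r) (hm : m < k) (hx : x ∈ SeqSub (seg a r m))
    (hlt : x < a (m + 1)) : ∃ j ∈ Finset.Icc 1 m, a j = x := by
  obtain ⟨B, hB, hne, rfl⟩ := mem_seqSub.1 hx
  have hr : r (m + 1) ∈ Finset.Icc 1 (r (m + 1)) :=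
    Finset.mem_Icc.2 ⟨E.one_le_r_succ hm, le_rfl⟩
  have hra : a (m + 1) ≤ r (m + 1) * a (m + 1) :=
    le_mul_of_one_le_left (E.a_pos (by omega) hm).le (by exact_mod_cast E.one_le_r_succ hm)
  -- the complement of `B` plus all copies of `a (m + 1)` exceeds the old total, so it is fresh
  obtain ⟨t, -, y, hy, heq⟩ :=
    mem_fresh.1 (E.mem_fresh_of_mem_succ hm (sub_add_mem_seqSub_succ hB hr) (by linarith))
  have hyb := E.mem_removable_bounds hm hy
  have hBpos := E.a_one_pos.trans_le (E.a_one_le_sum hm.le hB hne)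
  have hBy : B.sum = y := by
    have hdvd : a (m + 1) ∣ B.sum - y := ⟨r (m + 1) - t, by linarith⟩
    exact sub_eq_zero.1
      (Int.eq_zero_of_abs_lt_dvd hdvd (abs_sub_lt_iff.2 ⟨by linarith, by linarith⟩))
  rcases Finset.mem_insert.1 hy with rfl | hy
  · exact absurd hBy hBpos.ne'
  · obtain ⟨j, hj, rfl⟩ := Finset.mem_image.1 hy
    exact ⟨j, hj, hBy.symm⟩

theorem sum_notMem_Ioo (E : Extremal k a r) (hm : m < k) (hB : B ≤ seg a r m) :
    B.sum ∉ Set.Ioo (a (m + 1)) (a (m + 1) + a 1) := by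
  rintro ⟨hlo, hhi⟩
  have h1 : 1 ∈ Finset.Icc 1 (r (m + 1)) := Finset.mem_Icc.2 ⟨le_rfl, E.one_le_r_succ hm⟩
  -- trading `B` for one copy of `a (m + 1)` gives an old sum whose complement is below `a 1`
  have hv := E.mem_of_mem_succ hm (sub_add_mem_seqSub_succ hB h1) (by push_cast; linarith)
  obtain ⟨C, hC, -, hCsum⟩ := mem_seqSub.1 hv
  have hcompl : (seg a r m - C).sum = B.sum - a (m + 1) := by
    rw [sum_tsub_of_le hC, hCsum]
    push_cast
    ring
  have hne : seg a r m - C ≠ 0 := fun h => by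
    rw [h, Multiset.sum_zero] at hcompl
    linarith
  have := E.a_one_le_sum hm.le (Multiset.sub_le_self _ _) hne
  linarith

theorem a_succ_eq_of_pair_le (E : Extremal k a r) (h1 : 1 ≤ m) (hm : m < k)
    (hB : a 1 ::ₘ {a m} ≤ seg a r m) : a (m + 1) = a 1 + a m := by
  have hmem : a 1 + a m ∈ SeqSub (seg a r m) :=
    mem_seqSub.2 ⟨_, hB, Multiset.cons_ne_zero, by simp⟩
  have hlt := E.a_lt h1 (Nat.lt_succ_self m) hm
  refine le_antisymm (not_lt.1 fun hgt => ?_) (not_lt.1 fun hlt' => ?_)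
  · obtain ⟨j, hj, hj'⟩ := E.exists_a_eq_of_lt hm hmem hgt
    rw [Finset.mem_Icc] at hj
    have := E.a_le hj.1 hj.2 hm.le
    linarith [E.a_one_pos]
  · exact E.sum_notMem_Ioo hm hB ⟨by simpa using hlt', by simp; linarith⟩

theorem a_succ_eq (E : Extremal k a r) (h2 : 2 ≤ m) (hm : m < k) : a (m + 1) = a 1 + a m :=
  E.a_succ_eq_of_pair_le (by omega) hm
    (E.pair_le_seg hm.le (by simp; omega) (by simp; omega) (by omega))

theorem two_mul_a_one_le_a_two (E : Extremal k a r) (hk : 4 ≤ k) : 2 * a 1 ≤ a 2 := by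
  have h4 : a 4 = a 1 + a 3 := E.a_succ_eq (m := 3) (by norm_num) (by omega)
  have h12 := E.a_lt (i := 1) (j := 2) le_rfl one_lt_two (by omega)
  by_contra! h
  refine E.sum_notMem_Ioo (m := 3) (by omega)
    (E.pair_le_seg (i := 2) (j := 3) (by omega) (by simp) (by simp) (by norm_num)) ⟨?_, ?_⟩ <;>
  simp <;> linarith

theorem a_two_eq_of_two_le_r_one (E : Extremal k a r) (hk : 2 ≤ k) (hr1 : 2 ≤ r 1) :
    a 2 = 2 * a 1 := by
  have hB : a 1 ::ₘ {a 1} ≤ seg a r 1 := by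
    simpa [seg] using Multiset.replicate_mono (a 1) hr1
  rw [E.a_succ_eq_of_pair_le le_rfl (by omega) hB]
  ring

theorem a_two_le_of_r_one_eq_one_of_two_le_r_two (E : Extremal k a r) (hk : 3 ≤ k)
    (hr1 : r 1 = 1) (hr2 : 2 ≤ r 2) : a 2 ≤ 2 * a 1 := by
  by_contra! h
  have h3 : a 3 = a 1 + a 2 := E.a_succ_eq (m := 2) le_rfl (by omega)
  have hL1 : (seg a r 1).sum = a 1 := by simp [seg, hr1]
  have hL2 : (seg a r 2).sum = a 1 + r 2 * a 2 := by rw [sum_seg_succ, hL1]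
  have ha1 := E.a_one_pos
  have hr2a : 2 * a 2 ≤ r 2 * a 2 :=
    mul_le_mul_of_nonneg_right (by exact_mod_cast hr2) (by linarith)
  have hx := E.add_mem_seqSub (m := 3) (i := 1) (j := 3) hk (by simp) (by simp) (by norm_num)
  have hx2 := E.mem_of_mem_succ (m := 2) (by omega) hx (by rw [hL2]; linarith)
  obtain ⟨t, ht, y, hy, heq⟩ :=
    mem_fresh.1 (E.mem_fresh_of_mem_succ (m := 1) (by omega) hx2 (by rw [hL1]; linarith))
  simp only [removable, Finset.mem_insert, Finset.Icc_self, Finset.image_singleton,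
    Finset.mem_singleton] at hy
  rw [hL1] at heq
  rcases Nat.lt_or_ge t 2 with ht2 | ht2
  · have : t = 1 := by simp at ht; omega
    subst this
    rcases hy with rfl | rfl <;> push_cast at heq <;> linarith
  · have : 2 * a 2 ≤ t * a 2 := mul_le_mul_of_nonneg_right (by exact_mod_cast ht2) (by linarith)
    rcases hy with rfl | rfl <;> linarith

theorem a_two_le_of_r_one_eq_one_of_r_two_eq_one (E : Extremal k a r) (hk : 4 ≤ k)
    (hr1 : r 1 = 1) (hr2 : r 2 = 1) : a 2 ≤ 2 * a 1 := by
  by_contra! h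
  have h3 : a 3 = a 1 + a 2 := E.a_succ_eq (m := 2) le_rfl (by omega)
  have h4 : a 4 = a 1 + a 3 := E.a_succ_eq (m := 3) (by norm_num) (by omega)
  have hL2 : (seg a r 2).sum = a 1 + a 2 := by simp [seg, Finset.sum_Icc_succ_top, hr1, hr2]
  have hL3 : (seg a r 3).sum = a 1 + a 2 + r 3 * a 3 := by rw [sum_seg_succ, hL2]
  have ha1 := E.a_one_pos
  have hr3a : a 3 ≤ r 3 * a 3 := le_mul_of_one_le_left (by linarith)
    (by exact_mod_cast E.one_le_r 3 (by simp; omega))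
  have hx := E.add_mem_seqSub (m := 4) (i := 1) (j := 4) hk (by simp) (by simp) (by norm_num)
  have hx3 := E.mem_of_mem_succ (m := 3) (by omega) hx (by rw [hL3]; linarith)
  obtain ⟨t, ht, y, hy, heq⟩ :=
    mem_fresh.1 (E.mem_fresh_of_mem_succ (m := 2) (by omega) hx3 (by rw [hL2]; linarith))
  simp only [removable, show Finset.Icc 1 2 = {1, 2} from rfl, Finset.image_insert,
    Finset.image_singleton, Finset.mem_insert, Finset.mem_singleton] at hy
  rw [hL2, show 2 + 1 = 3 from rfl] at heq
  rcases Nat.lt_or_ge t 2 with ht2 | ht2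
  · have : t = 1 := by simp at ht; omega
    subst this
    rcases hy with rfl | rfl | rfl <;> push_cast at heq <;> linarith
  · have : 2 * a 3 ≤ t * a 3 := mul_le_mul_of_nonneg_right (by exact_mod_cast ht2) (by linarith)
    rcases hy with rfl | rfl | rfl <;> linarith

theorem a_two_eq (E : Extremal k a r) (hk : 4 ≤ k) : a 2 = 2 * a 1 := by
  refine le_antisymm ?_ (E.two_mul_a_one_le_a_two hk)
  have hr1 := E.one_le_r 1 (by simp; omega)
  have hr2 := E.one_le_r 2 (by simp; omega)
  rcases Nat.lt_or_ge (r 1) 2 with hr1' | hr1'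
  · rcases Nat.lt_or_ge (r 2) 2 with hr2' | hr2'
    · exact E.a_two_le_of_r_one_eq_one_of_r_two_eq_one hk (by omega) (by omega)
    · exact E.a_two_le_of_r_one_eq_one_of_two_le_r_two (by omega) (by omega) hr2'
  · exact (E.a_two_eq_of_two_le_r_one (by omega) hr1').le

theorem a_eq_mul (E : Extremal k a r) (hk : 4 ≤ k) {i : ℕ} (hi : 1 ≤ i) (hik : i ≤ k) :
    a i = i * a 1 := by
  induction i, hi using Nat.le_induction with
  | base => simp
  | succ n hn ih =>
    rcases eq_or_lt_of_le hn with rfl | hn2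
    · rw [E.a_two_eq hk]
      norm_num
    · rw [E.a_succ_eq hn2 hik, ih (by omega)]
      push_cast
      ring

end Extremal

end SubseqSum

theorem subsequence_sum_inverse (k : ℕ) (hk : 4 ≤ k) (a : ℕ → ℤ) (r : ℕ → ℕ)
    (ha : ∀ i j, 1 ≤ i → i < j → j ≤ k → a i < a j)
    (hpos : ∀ i, 1 ≤ i → i ≤ k → 0 < a i)
    (hr : ∀ i, 1 ≤ i → i ≤ k → 1 ≤ r i)
    (hcard : (SeqSub (∑ i ∈ Finset.Icc 1 k, Multiset.replicate (r i) (a i))).card =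
      ∑ i ∈ Finset.Icc 1 k, i * r i) :
    ∃ d : ℤ, 0 < d ∧ ∀ i, 1 ≤ i → i ≤ k → a i = (i : ℤ) * d := by
  have E : SubseqSum.Extremal k a r :=
    { strictMonoOn := fun i hi j hj hij => ha i j hi.1 hij hj.2
      a_one_pos := hpos 1 le_rfl (by omega)
      one_le_r := fun i hi => hr i (Finset.mem_Icc.1 hi).1 (Finset.mem_Icc.1 hi).2
      card_eq := hcard }
  exact ⟨a 1, E.a_one_pos, fun i hi hik => E.a_eq_mul hk hi hik⟩
end

section
/- Let k > 7 and let A = {0, 1, ..., k-3} ∪ {n-1, n} with n = a_{k-1} ≥ 2k-4 (so A = {a_0, a_1, ..., a_{k-1}} with 0 = a_0 < a_1 < ... < a_{k-1} and gcd(A) = 1). Then the restricted sumset 2^∧A equals {1, 2, ..., 2k-7} ∪ {n-1, n, ..., n+k-3} ∪ {2n-1}, so |2^∧A| = 3k - 7. -/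
open Pointwise

theorem restricted_sumset_tight_example (k : ℕ) (hk : 7 < k) (n : ℤ)
    (hn : 2 * (k : ℤ) - 4 ≤ n) :
    Res2 (Finset.Icc (0 : ℤ) ((k : ℤ) - 3) ∪ {n - 1, n}) =
      Finset.Icc (1 : ℤ) (2 * (k : ℤ) - 7) ∪ Finset.Icc (n - 1) (n + (k : ℤ) - 3) ∪ {2 * n - 1} ∧
    (Res2 (Finset.Icc (0 : ℤ) ((k : ℤ) - 3) ∪ {n - 1, n})).card = 3 * k - 7 := by
  have hmem : ∀ x : ℤ, x ∈ Res2 (Finset.Icc (0 : ℤ) ((k : ℤ) - 3) ∪ {n - 1, n}) ↔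
      ∃ a b : ℤ, ((0 ≤ a ∧ a ≤ (k:ℤ) - 3) ∨ a = n - 1 ∨ a = n) ∧
        ((0 ≤ b ∧ b ≤ (k:ℤ) - 3) ∨ b = n - 1 ∨ b = n) ∧ a ≠ b ∧ a + b = x := by
    intro x
    simp only [Res2, Finset.mem_image, Finset.mem_filter, Finset.mem_product,
      Finset.mem_union, Finset.mem_Icc, Finset.mem_insert, Finset.mem_singleton, Prod.exists]
    constructor
    · rintro ⟨a, b, ⟨⟨ha, hb⟩, hne⟩, hsum⟩
      exact ⟨a, b, ha, hb, hne, hsum⟩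
    · rintro ⟨a, b, ha, hb, hne, hsum⟩
      exact ⟨a, b, ⟨⟨ha, hb⟩, hne⟩, hsum⟩
  have heq : Res2 (Finset.Icc (0 : ℤ) ((k : ℤ) - 3) ∪ {n - 1, n}) =
      Finset.Icc (1 : ℤ) (2 * (k : ℤ) - 7) ∪ Finset.Icc (n - 1) (n + (k : ℤ) - 3) ∪ {2 * n - 1} := by
    ext x
    rw [hmem x]
    simp only [Finset.mem_union, Finset.mem_Icc, Finset.mem_singleton]
    constructor
    · rintro ⟨a, b, ha, hb, hne, hsum⟩; omega
    · intro hx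
      rcases hx with (⟨h1, h2⟩ | ⟨h1, h2⟩) | h1
      · rcases le_or_gt x ((k:ℤ) - 3) with h | h
        · exact ⟨0, x, by omega, by omega, by omega, by omega⟩
        · exact ⟨x - ((k:ℤ) - 3), (k:ℤ) - 3, by omega, by omega, by omega, by omega⟩
      · rcases eq_or_lt_of_le h1 with h | h
        · exact ⟨0, n - 1, by omega, by omega, by omega, by omega⟩
        · exact ⟨x - n, n, by omega, by omega, by omega, by omega⟩
      · exact ⟨n - 1, n, by omega, by omega, by omega, by omega⟩
  refine ⟨heq, ?_⟩
  rw [heq]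
  rw [Finset.card_union_of_disjoint, Finset.card_union_of_disjoint]
  · simp only [Int.card_Icc, Finset.card_singleton]
    omega
  · simp only [Finset.disjoint_left, Finset.mem_Icc, Finset.mem_union, Finset.mem_singleton]
    rintro x hx; omega
  · simp only [Finset.disjoint_left, Finset.mem_Icc, Finset.mem_union, Finset.mem_singleton]
    rintro x hx; omega
end

section
/- Let 𝔸 be a finite multiset of positive integers with exactly two distinct values a_1 < a_2, appearing r_1 and r_2 times respectively. Then |S(𝔸)| ≥ r_1 + 2·r_2. -/
open Pointwise

lemma mem_seqsub_of (a₁ a₂ : ℤ) (r₁ r₂ i j : ℕ) (hi : i ≤ r₁) (hj : j ≤ r₂) (hij : 1 ≤ i + j) :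
    (i : ℤ) * a₁ + (j : ℤ) * a₂ ∈ SeqSub (Multiset.replicate r₁ a₁ + Multiset.replicate r₂ a₂) := by
  have hB : (Multiset.replicate i a₁ + Multiset.replicate j a₂ : Multiset ℤ) ≤
      Multiset.replicate r₁ a₁ + Multiset.replicate r₂ a₂ :=
    add_le_add ((Multiset.replicate_le_replicate a₁).2 hi)
      ((Multiset.replicate_le_replicate a₂).2 hj)
  simp only [SeqSub, Multiset.mem_toFinset, Multiset.mem_map, Multiset.mem_filter,
    Multiset.mem_powerset]
  refine ⟨_, ⟨hB, ?_⟩, ?_⟩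
  · intro h
    have := congrArg Multiset.card h
    simp at this
    omega
  · simp [Multiset.sum_replicate, nsmul_eq_mul]

theorem subsequence_sum_two_values (a₁ a₂ : ℤ) (r₁ r₂ : ℕ)
    (hpos : 0 < a₁) (hlt : a₁ < a₂) (h1 : 1 ≤ r₁) (h2 : 1 ≤ r₂) :
    r₁ + 2 * r₂ ≤ (SeqSub (Multiset.replicate r₁ a₁ + Multiset.replicate r₂ a₂)).card := by
  set N := r₁ + 2 * r₂ with hN
  set f : ℕ → ℤ := fun k => if k < r₁ then ((k:ℤ)+1) * a₁
    else ((r₁:ℤ) - 1 + (((k - r₁) % 2 : ℕ) : ℤ)) * a₁ + ((((k - r₁)/2 : ℕ) : ℤ) + 1) * a₂ with hf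
  have hmono : StrictMono f := by
    apply strictMono_nat_of_lt_succ
    intro k
    by_cases hk1 : k + 1 < r₁
    · have hk : k < r₁ := by omega
      simp only [hf, if_pos hk1, if_pos hk]
      have : ((k:ℤ)+1+1) = ((k:ℤ)+1) + 1 := by ring
      push_cast
      nlinarith
    · by_cases hk : k < r₁
      · have he : k + 1 = r₁ := by omega
        have hm : k + 1 - r₁ = 0 := by omega
        simp only [hf, if_pos hk, if_neg hk1, hm]
        push_cast
        have : (k:ℤ) + 1 = (r₁:ℤ) := by exact_mod_cast congrArg Nat.cast he
        nlinarith
      · have hk1' : ¬ (k + 1 < r₁) := by omega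
        simp only [hf, if_neg hk, if_neg hk1']
        rcases Nat.even_or_odd (k - r₁) with ⟨t, ht⟩ | ⟨t, ht⟩
        · have e1 : (k - r₁) % 2 = 0 := by omega
          have e2 : (k - r₁) / 2 = t := by omega
          have e3 : (k + 1 - r₁) % 2 = 1 := by omega
          have e4 : (k + 1 - r₁) / 2 = t := by omega
          rw [e1, e2, e3, e4]
          push_cast
          nlinarith
        · have e1 : (k - r₁) % 2 = 1 := by omega
          have e2 : (k - r₁) / 2 = t := by omega
          have e3 : (k + 1 - r₁) % 2 = 0 := by omega
          have e4 : (k + 1 - r₁) / 2 = t + 1 := by omega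
          rw [e1, e2, e3, e4]
          push_cast
          nlinarith
  have hsub : Finset.image f (Finset.range N) ⊆
      SeqSub (Multiset.replicate r₁ a₁ + Multiset.replicate r₂ a₂) := by
    intro x hx
    simp only [Finset.mem_image, Finset.mem_range] at hx
    obtain ⟨k, hk, rfl⟩ := hx
    by_cases hkr : k < r₁
    · have : f k = ((k+1 : ℕ) : ℤ) * a₁ + ((0:ℕ) : ℤ) * a₂ := by
        simp only [hf, if_pos hkr]; push_cast; ring
      rw [this]
      exact mem_seqsub_of a₁ a₂ r₁ r₂ (k+1) 0 (by omega) (by omega) (by omega)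
    · have hi : r₁ - 1 + (k - r₁) % 2 ≤ r₁ := by omega
      have hj : (k - r₁) / 2 + 1 ≤ r₂ := by omega
      have : f k = ((r₁ - 1 + (k - r₁) % 2 : ℕ) : ℤ) * a₁ + (((k - r₁) / 2 + 1 : ℕ) : ℤ) * a₂ := by
        simp only [hf, if_neg hkr]
        have : ((r₁ - 1 + (k - r₁) % 2 : ℕ) : ℤ) = (r₁:ℤ) - 1 + (((k - r₁) % 2 : ℕ) : ℤ) := by
          push_cast [Nat.cast_sub h1]; ring
        rw [this]
        push_cast
        ring
      rw [this]
      exact mem_seqsub_of a₁ a₂ r₁ r₂ _ _ hi hj (by omega)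
  calc N = (Finset.image f (Finset.range N)).card := by
        rw [Finset.card_image_of_injective _ hmono.injective, Finset.card_range]
      _ ≤ _ := Finset.card_le_card hsub
end
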